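/- arXiv:2010.09146 — 7 statements merged into one kernel-verified Lean document; each statement's English description precedes it below -/
import Mathlib

section
/- Let Γ be a group and let E be a Γ-almost graded division ring, i.e. a nonzero ring together with additive subgroups (E_γ)_{γ∈Γ} such that 1 ∈ E_e, E = Σ_{γ∈Γ} E_γ, E_γ·E_{γ'} ⊆ E_{γγ'} for all γ, γ' ∈ Γ, and every nonzero x ∈ E_γ is invertible with x⁻¹ ∈ E_{γ⁻¹}. Let S = {γ ∈ Γ : E_γ ≠ {0}} (which is a subgroup of Γ) and let N = {γ ∈ S : E_γ = E_e}. Then N is a normal subgroup of S, and for all γ, γ' ∈ S one has E_γ = E_{γ'} if and only if γ⁻¹γ' ∈ N. -/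
/-- Let `E` be a `Γ`-almost graded division ring, let
`S = {γ : 𝒜 γ ≠ ⊥}` be its support (a subgroup of `Γ`) and
`N = {γ ∈ S : 𝒜 γ = 𝒜 1}`.  Then `N` is a normal subgroup of `S`
(it contains `1`, is closed under inverses and products, and is stable under
conjugation by elements of `S`), and for `γ, γ' ∈ S` one has
`𝒜 γ = 𝒜 γ'` if and only if `γ⁻¹ * γ' ∈ N`. -/
theorem almost_graded_division_ring_support_normal_subgroup
    {Γ : Type*} [Group Γ] {E : Type*} [Ring E] [Nontrivial E]
    (𝒜 : Γ → AddSubgroup E)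
    (hone : (1 : E) ∈ 𝒜 1)
    (hsum : (⨆ γ : Γ, 𝒜 γ) = (⊤ : AddSubgroup E))
    (hmul : ∀ {γ γ' : Γ} {x y : E}, x ∈ 𝒜 γ → y ∈ 𝒜 γ' → x * y ∈ 𝒜 (γ * γ'))
    (hinv : ∀ {γ : Γ} {x : E}, x ∈ 𝒜 γ → x ≠ 0 →
      ∃ y ∈ 𝒜 γ⁻¹, x * y = 1 ∧ y * x = 1)
    (S : Set Γ) (hS : S = {γ : Γ | 𝒜 γ ≠ ⊥})
    (N : Set Γ) (hN : N = {γ ∈ S | 𝒜 γ = 𝒜 1}) :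
    (1 : Γ) ∈ N ∧
    (∀ γ ∈ N, γ⁻¹ ∈ N) ∧
    (∀ γ ∈ N, ∀ γ' ∈ N, γ * γ' ∈ N) ∧
    (∀ σ ∈ S, ∀ γ ∈ N, σ * γ * σ⁻¹ ∈ N) ∧
    (∀ γ ∈ S, ∀ γ' ∈ S, (𝒜 γ = 𝒜 γ' ↔ γ⁻¹ * γ' ∈ N)) := by
  subst hS hN
  -- extract a unit from any nonzero piece
  have exu : ∀ {γ : Γ}, 𝒜 γ ≠ ⊥ →
      ∃ x ∈ 𝒜 γ, ∃ y ∈ 𝒜 γ⁻¹, x * y = 1 ∧ y * x = 1 := by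
    intro γ hγ
    have : ∃ x ∈ 𝒜 γ, x ≠ 0 := by
      by_contra h
      push_neg at h
      exact hγ ((AddSubgroup.eq_bot_iff_forall _).mpr h)
    obtain ⟨x, hx, hx0⟩ := this
    obtain ⟨y, hy, hxy, hyx⟩ := hinv hx hx0
    exact ⟨x, hx, y, hy, hxy, hyx⟩
  -- 𝒜 1 ≠ ⊥
  have h1ne : 𝒜 (1 : Γ) ≠ ⊥ := by
    intro h
    have := (AddSubgroup.eq_bot_iff_forall _).mp h 1 hone
    exact one_ne_zero this
  -- S closed under inverse
  have Sinv : ∀ {γ : Γ}, 𝒜 γ ≠ ⊥ → 𝒜 γ⁻¹ ≠ ⊥ := by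
    intro γ hγ h
    obtain ⟨x, hx, y, hy, hxy, hyx⟩ := exu hγ
    have hy0 := (AddSubgroup.eq_bot_iff_forall _).mp h y hy
    rw [hy0, zero_mul] at hyx
    exact one_ne_zero hyx.symm
  -- left multiplication by support elements preserves piece equality
  have keyL : ∀ {γ : Γ}, 𝒜 γ ≠ ⊥ → ∀ {δ δ' : Γ}, 𝒜 δ = 𝒜 δ' →
      𝒜 (γ * δ) = 𝒜 (γ * δ') := by
    intro γ hγ δ δ' h
    obtain ⟨x, hx, y, hy, hxy, hyx⟩ := exu hγ
    have incl : ∀ {δ δ' : Γ}, 𝒜 δ = 𝒜 δ' → ∀ z ∈ 𝒜 (γ * δ), z ∈ 𝒜 (γ * δ') := by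
      intro δ δ' h z hz
      have h1 : y * z ∈ 𝒜 (γ⁻¹ * (γ * δ)) := hmul hy hz
      rw [inv_mul_cancel_left, h] at h1
      have h2 := hmul hx h1
      rwa [← mul_assoc, hxy, one_mul] at h2
    ext z
    exact ⟨incl h z, incl h.symm z⟩
  -- right multiplication by support elements preserves piece equality
  have keyR : ∀ {γ : Γ}, 𝒜 γ ≠ ⊥ → ∀ {δ δ' : Γ}, 𝒜 δ = 𝒜 δ' →
      𝒜 (δ * γ) = 𝒜 (δ' * γ) := by
    intro γ hγ δ δ' h
    obtain ⟨x, hx, y, hy, hxy, hyx⟩ := exu hγ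
    have incl : ∀ {δ δ' : Γ}, 𝒜 δ = 𝒜 δ' → ∀ z ∈ 𝒜 (δ * γ), z ∈ 𝒜 (δ' * γ) := by
      intro δ δ' h z hz
      have h1 : z * y ∈ 𝒜 (δ * γ * γ⁻¹) := hmul hz hy
      rw [mul_inv_cancel_right, h] at h1
      have h2 := hmul h1 hx
      rwa [mul_assoc, hyx, mul_one] at h2
    ext z
    exact ⟨incl h z, incl h.symm z⟩
  refine ⟨⟨h1ne, rfl⟩, ?_, ?_, ?_, ?_⟩
  · rintro γ ⟨hγS, hγ1⟩
    have h := keyL (Sinv hγS) hγ1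
    rw [inv_mul_cancel, mul_one] at h
    exact ⟨Sinv hγS, h.symm⟩
  · rintro γ ⟨hγS, hγ1⟩ γ' ⟨hγ'S, hγ'1⟩
    have h := keyL hγS hγ'1
    rw [mul_one] at h
    have heq := h.trans hγ1
    exact ⟨by show 𝒜 _ ≠ ⊥; rw [heq]; exact h1ne, heq⟩
  · rintro σ hσS γ ⟨hγS, hγ1⟩
    have h1 := keyL hσS hγ1
    rw [mul_one] at h1
    have h2 := keyR (Sinv hσS) h1
    rw [mul_inv_cancel] at h2
    exact ⟨by show 𝒜 _ ≠ ⊥; rw [h2]; exact h1ne, h2⟩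
  · intro γ hγS γ' hγ'S
    constructor
    · intro h
      have h1 := keyL (Sinv hγS) h
      rw [inv_mul_cancel] at h1
      exact ⟨by show 𝒜 _ ≠ ⊥; rw [← h1]; exact h1ne, h1.symm⟩
    · rintro ⟨-, h⟩
      have h1 := keyL hγS h
      rw [mul_inv_cancel_left, mul_one] at h1
      exact h1.symm
end

section
/- Let Γ be a group, D a Γ-graded division ring, S a nonzero ring, and f : D → S a ring homomorphism. Let n ≥ 1 and let A be an n×n matrix over D that is homogeneous of distribution (ᾱ, β̄) for some ᾱ, β̄ ∈ Γ^n. Then A is invertible in the matrix ring M_n(D) if and only if A^f is invertible in M_n(S). -/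
open Matrix

universe u v w

section GradedDefs

variable {Γ : Type u} [Group Γ] {R : Type v} [Ring R]

/-- `A` is a homogeneous matrix of distribution `(α, β)`:
its `(i,j)` entry lies in `𝒜 (α i * (β j)⁻¹)`. -/
def IsHomog (𝒜 : Γ → AddSubgroup R) {m n : ℕ}
    (A : Matrix (Fin m) (Fin n) R) (α : Fin m → Γ) (β : Fin n → Γ) : Prop :=
  ∀ i j, A i j ∈ 𝒜 (α i * (β j)⁻¹)

/-- `A` is a homogeneous matrix for some distribution. -/
def IsHomogSq (𝒜 : Γ → AddSubgroup R) {m n : ℕ}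
    (A : Matrix (Fin m) (Fin n) R) : Prop :=
  ∃ (α : Fin m → Γ) (β : Fin n → Γ), IsHomog 𝒜 A α β

end GradedDefs

/-- Square matrices over `R` of arbitrary finite size. -/
abbrev SqMat (R : Type v) : Type v := Σ n : ℕ, Matrix (Fin n) (Fin n) R

section GradedDefs

variable {Γ : Type u} [Group Γ] {R : Type v} [Ring R]

/-- Diagonal sum `A ⊕ B` of two (rectangular) matrices. -/
def diagSum {m n m' n' : ℕ} (A : Matrix (Fin m) (Fin n) R)
    (B : Matrix (Fin m') (Fin n') R) : Matrix (Fin (m + m')) (Fin (n + n')) R :=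
  Matrix.reindex finSumFinEquiv finSumFinEquiv (Matrix.fromBlocks A 0 0 B)

/-- Block lower triangular matrix `[[A, 0], [C, B]]`. -/
def lowerBlockSum {n m : ℕ} (A : Matrix (Fin n) (Fin n) R) (B : Matrix (Fin m) (Fin m) R)
    (C : Matrix (Fin m) (Fin n) R) : Matrix (Fin (n + m)) (Fin (n + m)) R :=
  Matrix.reindex finSumFinEquiv finSumFinEquiv (Matrix.fromBlocks A 0 C B)

/-- Block upper triangular matrix `[[A, C], [0, B]]` with rectangular blocks. -/
def upperBlockSum {m n m' n' : ℕ} (A : Matrix (Fin m) (Fin n) R)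
    (B : Matrix (Fin m') (Fin n') R) (C : Matrix (Fin m) (Fin n') R) :
    Matrix (Fin (m + m')) (Fin (n + n')) R :=
  Matrix.reindex finSumFinEquiv finSumFinEquiv (Matrix.fromBlocks A C 0 B)

/-- `C` is the determinantal sum of `A` and `B` with respect to some column or row:
`A` and `B` agree away from that column (row) and the distinguished column (row) of `C`
is the sum of the corresponding columns (rows) of `A` and `B`. -/
def IsDetSum {n : ℕ} (A B C : Matrix (Fin n) (Fin n) R) : Prop :=
  (∃ c : Fin n, (∀ i j, j ≠ c → A i j = B i j) ∧
      ∀ i j, C i j = if j = c then A i j + B i j else A i j) ∨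
  (∃ r : Fin n, (∀ i j, i ≠ r → A i j = B i j) ∧
      ∀ i j, C i j = if i = r then A i j + B i j else A i j)

/-- `C` is the determinantal sum of the homogeneous matrices `A` and `B`
(which have a common distribution). -/
def GrDetSum (𝒜 : Γ → AddSubgroup R) {n : ℕ} (A B C : Matrix (Fin n) (Fin n) R) : Prop :=
  (∃ α β : Fin n → Γ, IsHomog 𝒜 A α β ∧ IsHomog 𝒜 B α β) ∧ IsDetSum A B C

/-- A square homogeneous matrix `A` is gr-full if whenever `A = P * Q` with `P`
homogeneous of distribution `(α, lam)` and `Q` homogeneous of distribution `(lam, β)`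
where `lam` has length `r`, then `r ≥ n`. -/
def IsGrFull (𝒜 : Γ → AddSubgroup R) {n : ℕ} (A : Matrix (Fin n) (Fin n) R) : Prop :=
  ∀ (r : ℕ) (P : Matrix (Fin n) (Fin r) R) (Q : Matrix (Fin r) (Fin n) R)
    (α : Fin n → Γ) (lam : Fin r → Γ) (β : Fin n → Γ),
    IsHomog 𝒜 P α lam → IsHomog 𝒜 Q lam β → A = P * Q → n ≤ r

/-- gr-prime matrix ideal: a set of square homogeneous matrices satisfying (PM1)–(PM6). -/
structure IsGrPrimeMatrixIdeal (𝒜 : Γ → AddSubgroup R) (P : Set (SqMat R)) : Prop where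
  subset_homog : ∀ p ∈ P, IsHomogSq 𝒜 p.2
  pm1 : ∀ {n : ℕ} (A : Matrix (Fin n) (Fin n) R),
    IsHomogSq 𝒜 A → ¬ IsGrFull 𝒜 A → (⟨n, A⟩ : SqMat R) ∈ P
  pm2 : ∀ {n : ℕ} (A B C : Matrix (Fin n) (Fin n) R),
    (⟨n, A⟩ : SqMat R) ∈ P → (⟨n, B⟩ : SqMat R) ∈ P → GrDetSum 𝒜 A B C →
    (⟨n, C⟩ : SqMat R) ∈ P
  pm3 : ∀ {m n : ℕ} (A : Matrix (Fin m) (Fin m) R) (B : Matrix (Fin n) (Fin n) R),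
    (⟨m, A⟩ : SqMat R) ∈ P → IsHomogSq 𝒜 B → (⟨m + n, diagSum A B⟩ : SqMat R) ∈ P
  pm4 : ∀ {m n : ℕ} (A : Matrix (Fin m) (Fin m) R) (B : Matrix (Fin n) (Fin n) R),
    IsHomogSq 𝒜 A → IsHomogSq 𝒜 B → (⟨m + n, diagSum A B⟩ : SqMat R) ∈ P →
    (⟨m, A⟩ : SqMat R) ∈ P ∨ (⟨n, B⟩ : SqMat R) ∈ P
  pm5 : (⟨1, (1 : Matrix (Fin 1) (Fin 1) R)⟩ : SqMat R) ∉ P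
  pm6 : ∀ {n : ℕ} (A : Matrix (Fin n) (Fin n) R) (e f : Equiv.Perm (Fin n)),
    (⟨n, A⟩ : SqMat R) ∈ P → (⟨n, A.submatrix ⇑e ⇑f⟩ : SqMat R) ∈ P

/-- gr-matrix ideal: a set of square homogeneous matrices satisfying (I1)–(I5). -/
structure IsGrMatrixIdeal (𝒜 : Γ → AddSubgroup R) (I : Set (SqMat R)) : Prop where
  subset_homog : ∀ p ∈ I, IsHomogSq 𝒜 p.2
  i1 : ∀ {n : ℕ} (A : Matrix (Fin n) (Fin n) R),
    IsHomogSq 𝒜 A → ¬ IsGrFull 𝒜 A → (⟨n, A⟩ : SqMat R) ∈ I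
  i2 : ∀ {n : ℕ} (A B C : Matrix (Fin n) (Fin n) R),
    (⟨n, A⟩ : SqMat R) ∈ I → (⟨n, B⟩ : SqMat R) ∈ I → GrDetSum 𝒜 A B C →
    (⟨n, C⟩ : SqMat R) ∈ I
  i3 : ∀ {m n : ℕ} (A : Matrix (Fin m) (Fin m) R) (B : Matrix (Fin n) (Fin n) R),
    (⟨m, A⟩ : SqMat R) ∈ I → IsHomogSq 𝒜 B → (⟨m + n, diagSum A B⟩ : SqMat R) ∈ I
  i4 : ∀ {n : ℕ} (A : Matrix (Fin n) (Fin n) R) (e f : Equiv.Perm (Fin n)),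
    (⟨n, A⟩ : SqMat R) ∈ I → (⟨n, A.submatrix ⇑e ⇑f⟩ : SqMat R) ∈ I
  i5 : ∀ {n : ℕ} (A : Matrix (Fin n) (Fin n) R),
    (⟨n + 1, diagSum A (1 : Matrix (Fin 1) (Fin 1) R)⟩ : SqMat R) ∈ I →
    (⟨n, A⟩ : SqMat R) ∈ I

/-- The diagonal sum of `r` copies of `A`. -/
def diagIter {n : ℕ} (A : Matrix (Fin n) (Fin n) R) :
    (r : ℕ) → Matrix (Fin (n * r)) (Fin (n * r)) R
  | 0 => 0
  | r + 1 => diagSum (diagIter A r) A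

/-- Iterated determinantal sums (with arbitrary bracketing) of elements of `W`. -/
inductive IsDetSumOf (𝒜 : Γ → AddSubgroup R) (W : Set (SqMat R)) : SqMat R → Prop
  | base (p : SqMat R) (hp : p ∈ W) : IsDetSumOf 𝒜 W p
  | step {n : ℕ} (A B C : Matrix (Fin n) (Fin n) R)
      (hA : IsDetSumOf 𝒜 W ⟨n, A⟩) (hB : IsDetSumOf 𝒜 W ⟨n, B⟩)
      (h : GrDetSum 𝒜 A B C) : IsDetSumOf 𝒜 W ⟨n, C⟩

/-- The homogeneous rational closure of degree `γ`: entries `(j,i)` of inverses of matrices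
`A^f` with `A ∈ Sig` homogeneous of distribution `(α, β)` and `β j * (α i)⁻¹ = γ`. -/
def RatCl (𝒜 : Γ → AddSubgroup R) {S : Type w} [Ring S] (Sig : Set (SqMat R)) (f : R →+* S)
    (γ : Γ) : Set S :=
  {x | ∃ (n : ℕ) (A : Matrix (Fin n) (Fin n) R) (α β : Fin n → Γ) (i j : Fin n)
        (B : Matrix (Fin n) (Fin n) S),
      (⟨n, A⟩ : SqMat R) ∈ Sig ∧ IsHomog 𝒜 A α β ∧ β j * (α i)⁻¹ = γ ∧
      (A.map ⇑f) * B = 1 ∧ B * (A.map ⇑f) = 1 ∧ B j i = x}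

/-- gr-lower semimultiplicative set of square homogeneous matrices. -/
def IsGrLowerSemimult (𝒜 : Γ → AddSubgroup R) (Sig : Set (SqMat R)) : Prop :=
  ((⟨1, (1 : Matrix (Fin 1) (Fin 1) R)⟩ : SqMat R) ∈ Sig) ∧
  ∀ {n m : ℕ} (A : Matrix (Fin n) (Fin n) R) (B : Matrix (Fin m) (Fin m) R)
    (α β : Fin n → Γ) (α' β' : Fin m → Γ) (C : Matrix (Fin m) (Fin n) R),
    (⟨n, A⟩ : SqMat R) ∈ Sig → (⟨m, B⟩ : SqMat R) ∈ Sig →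
    IsHomog 𝒜 A α β → IsHomog 𝒜 B α' β' → IsHomog 𝒜 C α' β →
    (⟨n + m, lowerBlockSum A B C⟩ : SqMat R) ∈ Sig

end GradedDefs

/-- A homomorphism of `Γ`-graded rings from `(R, 𝒜)` to a `Γ`-graded division ring. -/
structure GrDivRingHom (Γ : Type u) [Group Γ] [DecidableEq Γ] (R : Type v) [Ring R]
    (𝒜 : Γ → AddSubgroup R) where
  K : Type (max u v)
  [ringK : Ring K]
  [nontrivialK : Nontrivial K]
  grading : Γ → AddSubgroup K
  internal : DirectSum.IsInternal grading
  one_mem : (1 : K) ∈ grading 1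
  mul_mem : ∀ {γ δ : Γ} {x y : K}, x ∈ grading γ → y ∈ grading δ → x * y ∈ grading (γ * δ)
  isUnit_of_ne : ∀ {γ : Γ} {x : K}, x ∈ grading γ → x ≠ 0 → IsUnit x
  φ : R →+* K
  map_mem : ∀ {γ : Γ} {r : R}, r ∈ 𝒜 γ → φ r ∈ grading γ

attribute [instance] GrDivRingHom.ringK GrDivRingHom.nontrivialK

/-! Gaussian elimination, by induction on `n`. If the first row of `A` vanishes, so does that of
`A^f`, which is then not invertible because `S ≠ 0`. Otherwise a nonzero entry `a` of the first row
is homogeneous, hence a unit whose inverse is again homogeneous, and the Schur complement of the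
pivot `a` is a homogeneous `(n-1) × (n-1)` matrix. Over any ring a block matrix with an invertible
corner is invertible iff its Schur complement is, and forming the Schur complement commutes with
`f`, so the induction hypothesis applies. -/

namespace Matrix

variable {R : Type*} [Ring R] {m n : Type*} [Fintype m] [Fintype n] [DecidableEq m] [DecidableEq n]

theorem _root_.IsUnit.submatrix_equiv {A : Matrix m m R} (hA : IsUnit A) (e₁ e₂ : n ≃ m) :
    IsUnit (A.submatrix e₁ e₂) := by
  obtain ⟨B, hAB, hBA⟩ := isUnit_iff_exists.mp hA
  refine isUnit_iff_exists.mpr ⟨B.submatrix e₂ e₁, ?_, ?_⟩ <;>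
    simp [submatrix_mul_equiv, hAB, hBA, submatrix_one_equiv]

theorem isUnit_submatrix_equiv' {A : Matrix m m R} (e₁ e₂ : n ≃ m) :
    IsUnit (A.submatrix e₁ e₂) ↔ IsUnit A :=
  ⟨fun h => by simpa using h.submatrix_equiv e₁.symm e₂.symm, fun h => h.submatrix_equiv e₁ e₂⟩

theorem not_isUnit_of_row_eq_zero [Nontrivial R] {A : Matrix n n R} {i : n} (h : A i = 0) :
    ¬IsUnit A := by
  rintro ⟨u, rfl⟩
  have := congr_fun₂ u.mul_inv i i
  simp [mul_apply, h] at this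

theorem isUnit_fromBlocks_zero_zero {A : Matrix m m R} {D : Matrix n n R} :
    IsUnit (fromBlocks A 0 0 D) ↔ IsUnit A ∧ IsUnit D := by
  constructor
  · intro h
    obtain ⟨X, h₁, h₂⟩ := isUnit_iff_exists.mp h
    rw [← fromBlocks_toBlocks X, fromBlocks_multiply, ← fromBlocks_one, fromBlocks_inj] at h₁ h₂
    simp only [Matrix.zero_mul, Matrix.mul_zero, add_zero, zero_add] at h₁ h₂
    exact ⟨isUnit_iff_exists.mpr ⟨_, h₁.1, h₂.1⟩, isUnit_iff_exists.mpr ⟨_, h₁.2.2.2, h₂.2.2.2⟩⟩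
  · rintro ⟨⟨a, rfl⟩, ⟨d, rfl⟩⟩
    refine isUnit_iff_exists.mpr ⟨fromBlocks ↑a⁻¹ 0 0 ↑d⁻¹, ?_, ?_⟩ <;>
      simp [fromBlocks_multiply, fromBlocks_one]

theorem isUnit_fromBlocks_one_zero₂₁ (B : Matrix m n R) :
    IsUnit (fromBlocks (1 : Matrix m m R) B 0 (1 : Matrix n n R)) := by
  refine isUnit_iff_exists.mpr ⟨fromBlocks 1 (-B) 0 1, ?_, ?_⟩ <;>
    simp [fromBlocks_multiply, fromBlocks_one]

theorem isUnit_fromBlocks_one_zero₁₂ (C : Matrix n m R) :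
    IsUnit (fromBlocks (1 : Matrix m m R) 0 C (1 : Matrix n n R)) := by
  refine isUnit_iff_exists.mpr ⟨fromBlocks 1 0 (-C) 1, ?_, ?_⟩ <;>
    simp [fromBlocks_multiply, fromBlocks_one]

theorem fromBlocks_eq_of_unit₂₂ (A : Matrix m m R) (B : Matrix m n R) (C : Matrix n m R)
    (D : (Matrix n n R)ˣ) :
    fromBlocks A B C D =
      fromBlocks 1 (B * (↑D⁻¹ : Matrix n n R)) 0 1 *
        fromBlocks (A - B * (↑D⁻¹ : Matrix n n R) * C) 0 0 D *
          fromBlocks 1 0 ((↑D⁻¹ : Matrix n n R) * C) 1 := by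
  simp only [fromBlocks_multiply]
  simp [Matrix.mul_assoc, ← Matrix.mul_assoc (D : Matrix n n R)]

theorem isUnit_fromBlocks_iff_of_unit₂₂ {A : Matrix m m R} {B : Matrix m n R}
    {C : Matrix n m R} (D : (Matrix n n R)ˣ) :
    IsUnit (fromBlocks A B C D) ↔ IsUnit (A - B * (↑D⁻¹ : Matrix n n R) * C) := by
  obtain ⟨L, hL⟩ := isUnit_fromBlocks_one_zero₂₁ (B * (↑D⁻¹ : Matrix n n R))
  obtain ⟨U, hU⟩ := isUnit_fromBlocks_one_zero₁₂ ((↑D⁻¹ : Matrix n n R) * C)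
  rw [fromBlocks_eq_of_unit₂₂, ← hL, ← hU, Units.isUnit_mul_units, Units.isUnit_units_mul,
    isUnit_fromBlocks_zero_zero]
  simp

end Matrix

def finSuccAboveSumEquiv {n : ℕ} (i : Fin (n + 1)) : Fin n ⊕ Unit ≃ Fin (n + 1) :=
  ((finSuccEquiv' i).trans (Equiv.optionEquivSumPUnit (Fin n))).symm

@[simp] theorem finSuccAboveSumEquiv_inl {n : ℕ} (i : Fin (n + 1)) (k : Fin n) :
    finSuccAboveSumEquiv i (.inl k) = i.succAbove k := rfl

@[simp] theorem finSuccAboveSumEquiv_inr {n : ℕ} (i : Fin (n + 1)) (x : Unit) :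
    finSuccAboveSumEquiv i (.inr x) = i := rfl

namespace Matrix

variable {R : Type*} [Ring R] {n : ℕ}

def pivotSchur (A : Matrix (Fin (n + 1)) (Fin (n + 1)) R) (i j : Fin (n + 1)) (v : R) :
    Matrix (Fin n) (Fin n) R :=
  of fun k l => A (i.succAbove k) (j.succAbove l) - A (i.succAbove k) j * v * A i (j.succAbove l)

theorem isUnit_iff_isUnit_pivotSchur {A : Matrix (Fin (n + 1)) (Fin (n + 1)) R}
    {i j : Fin (n + 1)} (u : Rˣ) (hu : A i j = u) :
    IsUnit A ↔ IsUnit (A.pivotSchur i j ↑u⁻¹) := by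
  let U : (Matrix Unit Unit R)ˣ := Units.map (scalar Unit : R →+* _).toMonoidHom u
  have hblocks : A.submatrix (finSuccAboveSumEquiv i) (finSuccAboveSumEquiv j) =
      fromBlocks (of fun k l => A (i.succAbove k) (j.succAbove l))
        (of fun k _ => A (i.succAbove k) j) (of fun _ l => A i (j.succAbove l)) U := by
    ext (k | k) (l | l) <;> simp [U, hu]
  rw [← isUnit_submatrix_equiv' (finSuccAboveSumEquiv i) (finSuccAboveSumEquiv j), hblocks,
    isUnit_fromBlocks_iff_of_unit₂₂]
  congr! 1
  ext k l
  simp [U, pivotSchur, mul_apply]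

theorem pivotSchur_map {S : Type*} [Ring S] (f : R →+* S)
    (A : Matrix (Fin (n + 1)) (Fin (n + 1)) R) (i j : Fin (n + 1)) (v : R) :
    (A.pivotSchur i j v).map f = (A.map f).pivotSchur i j (f v) := by
  ext k l
  simp [pivotSchur]

end Matrix

section Graded

variable {Γ : Type*} [Group Γ] {D : Type*} [Ring D] (𝒜 : Γ → AddSubgroup D)

theorem isHomog_pivotSchur
    (hmul : ∀ {γ δ : Γ} {x y : D}, x ∈ 𝒜 γ → y ∈ 𝒜 δ → x * y ∈ 𝒜 (γ * δ))
    {n : ℕ} {A : Matrix (Fin (n + 1)) (Fin (n + 1)) D} {α β : Fin (n + 1) → Γ}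
    (hA : IsHomog 𝒜 A α β) {i j : Fin (n + 1)} {v : D} (hv : v ∈ 𝒜 (β j * (α i)⁻¹)) :
    IsHomog 𝒜 (A.pivotSchur i j v) (α ∘ i.succAbove) (β ∘ j.succAbove) := by
  intro k l
  refine sub_mem (hA _ _) ?_
  have h := hmul (hmul (hA (i.succAbove k) j) hv) (hA i (j.succAbove l))
  rwa [show α (i.succAbove k) * (β j)⁻¹ * (β j * (α i)⁻¹) * (α i * (β (j.succAbove l))⁻¹) =
    α (i.succAbove k) * (β (j.succAbove l))⁻¹ by group] at h

variable [DecidableEq Γ] [DirectSum.Decomposition 𝒜]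

theorem decompose_mul_of_mem_left
    (hmul : ∀ {γ δ : Γ} {x y : D}, x ∈ 𝒜 γ → y ∈ 𝒜 δ → x * y ∈ 𝒜 (γ * δ))
    {γ : Γ} {x : D} (hx : x ∈ 𝒜 γ) (y : D) (δ : Γ) :
    (DirectSum.decompose 𝒜 (x * y) (γ * δ) : D) = x * DirectSum.decompose 𝒜 y δ := by
  induction y using DirectSum.Decomposition.inductionOn 𝒜 with
  | zero => simp
  | @homogeneous δ' y =>
    by_cases h : δ' = δ
    · subst h
      rw [DirectSum.decompose_of_mem_same 𝒜 y.2, DirectSum.decompose_of_mem_same 𝒜 (hmul hx y.2)]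
    · rw [DirectSum.decompose_of_mem_ne 𝒜 y.2 h,
        DirectSum.decompose_of_mem_ne 𝒜 (hmul hx y.2) ((mul_right_injective γ).ne h), mul_zero]
  | add y y' hy hy' => simp [mul_add, hy, hy']

theorem units_inv_mem (hone : (1 : D) ∈ 𝒜 1)
    (hmul : ∀ {γ δ : Γ} {x y : D}, x ∈ 𝒜 γ → y ∈ 𝒜 δ → x * y ∈ 𝒜 (γ * δ))
    {γ : Γ} {u : Dˣ} (hu : (u : D) ∈ 𝒜 γ) : (↑u⁻¹ : D) ∈ 𝒜 γ⁻¹ := by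
  have h : (u : D) * DirectSum.decompose 𝒜 (↑u⁻¹ : D) γ⁻¹ = 1 := by
    rw [← decompose_mul_of_mem_left 𝒜 hmul hu, mul_inv_cancel, Units.mul_inv,
      DirectSum.decompose_of_mem_same 𝒜 hone]
  rw [Units.inv_eq_of_mul_eq_one_right h]
  exact SetLike.coe_mem _

theorem isUnit_of_isUnit_map_of_isHomog (hone : (1 : D) ∈ 𝒜 1)
    (hmul : ∀ {γ δ : Γ} {x y : D}, x ∈ 𝒜 γ → y ∈ 𝒜 δ → x * y ∈ 𝒜 (γ * δ))
    (hdiv : ∀ {γ : Γ} {x : D}, x ∈ 𝒜 γ → x ≠ 0 → IsUnit x)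
    {S : Type*} [Ring S] [Nontrivial S] (f : D →+* S) {n : ℕ} {A : Matrix (Fin n) (Fin n) D}
    {α β : Fin n → Γ} (hA : IsHomog 𝒜 A α β) (hAf : IsUnit (A.map f)) : IsUnit A := by
  induction n with
  | zero => exact isUnit_of_subsingleton A
  | succ n ih =>
    obtain ⟨j, hj⟩ : ∃ j, A 0 j ≠ 0 := by
      by_contra! h
      exact not_isUnit_of_row_eq_zero (i := 0) (funext fun j => by simp [h]) hAf
    obtain ⟨u, hu⟩ := hdiv (hA 0 j) hj
    have hv := units_inv_mem 𝒜 hone hmul (hu ▸ hA 0 j)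
    rw [_root_.mul_inv_rev, inv_inv] at hv
    rw [isUnit_iff_isUnit_pivotSchur u hu.symm]
    refine ih (isHomog_pivotSchur 𝒜 hmul hA hv) ?_
    rwa [pivotSchur_map, show f ↑u⁻¹ = ↑(u.map (f : D →* S))⁻¹ by simp,
      ← isUnit_iff_isUnit_pivotSchur (u.map (f : D →* S)) (by simp [hu])]

end Graded

theorem graded_division_ring_isUnit_matrix_iff_isUnit_map_general
    {Γ : Type u} [Group Γ] [DecidableEq Γ] {D : Type v} [Ring D]
    (𝒜 : Γ → AddSubgroup D)
    (hinternal : DirectSum.IsInternal 𝒜)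
    (hone : (1 : D) ∈ 𝒜 1)
    (hmul : ∀ {γ δ : Γ} {x y : D}, x ∈ 𝒜 γ → y ∈ 𝒜 δ → x * y ∈ 𝒜 (γ * δ))
    (hdiv : ∀ {γ : Γ} {x : D}, x ∈ 𝒜 γ → x ≠ 0 → IsUnit x)
    {S : Type w} [Ring S] [Nontrivial S] (f : D →+* S)
    {n : ℕ} (A : Matrix (Fin n) (Fin n) D)
    (α β : Fin n → Γ) (hA : IsHomog 𝒜 A α β) :
    IsUnit A ↔ IsUnit (A.map ⇑f) := by
  let _ := hinternal.chooseDecomposition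
  exact ⟨fun h => by simpa using h.map f.mapMatrix,
    isUnit_of_isUnit_map_of_isHomog 𝒜 hone hmul hdiv f hA⟩

/-- Let `D` be a `Γ`-graded division ring, `S` a nonzero ring and
`f : D → S` a ring homomorphism.  If `A` is an `n × n` homogeneous matrix of
distribution `(α, β)` over `D` (`n ≥ 1`), then `A` is invertible in `M_n(D)` if
and only if `A^f` is invertible in `M_n(S)`. -/
theorem graded_division_ring_isUnit_matrix_iff_isUnit_map
    {Γ : Type u} [Group Γ] [DecidableEq Γ] {D : Type v} [Ring D] [Nontrivial D]
    (𝒜 : Γ → AddSubgroup D)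
    (hinternal : DirectSum.IsInternal 𝒜)
    (hone : (1 : D) ∈ 𝒜 1)
    (hmul : ∀ {γ δ : Γ} {x y : D}, x ∈ 𝒜 γ → y ∈ 𝒜 δ → x * y ∈ 𝒜 (γ * δ))
    (hdiv : ∀ {γ : Γ} {x : D}, x ∈ 𝒜 γ → x ≠ 0 → IsUnit x)
    {S : Type w} [Ring S] [Nontrivial S] (f : D →+* S)
    {n : ℕ} (hn : 0 < n) (A : Matrix (Fin n) (Fin n) D)
    (α β : Fin n → Γ) (hA : IsHomog 𝒜 A α β) :
    IsUnit A ↔ IsUnit (A.map ⇑f) :=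
  graded_division_ring_isUnit_matrix_iff_isUnit_map_general 𝒜 hinternal hone hmul hdiv f A α β hA
end

section
/- Let S be a ring and n ≥ 1. Let A be an n×(n+1) matrix over S with columns A_0, A_1, …, A_{n-1}, A_∞ (in this order), and let u ∈ S^{n+1} be a column vector with first entry u_0 = 1 and last entry u_∞ = x such that A·u = 0. Assume that the n×n 'denominator' matrix (A_1 ⋯ A_{n-1} A_∞) is invertible in M_n(S). Then: (1) x is a unit of S if and only if the n×n 'numerator' matrix (A_0 A_1 ⋯ A_{n-1}) is invertible in M_n(S); (2) x is a regular element of S if and only if the numerator matrix is a regular element of the ring M_n(S). -/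
private lemma sum_eq_of_single {S : Type*} [AddCommMonoid S] {N : ℕ} (c : Fin N)
    (g : Fin N → S) (h : ∀ k, k ≠ c → g k = 0) : ∑ k, g k = g c :=
  Finset.sum_eq_single_of_mem c (Finset.mem_univ c) fun k _ hk => h k hk

/-- **Cramer's rule, parts (1) and (2).** Let `S` be a ring, `n ≥ 1`,
`A` an `n × (n+1)` matrix over `S` with columns `A_0, A_1, …, A_{n-1}, A_∞`, and
`u ∈ S^{n+1}` a column with `u 0 = 1` and last entry `x` such that `A · u = 0`.
Assume the denominator `(A_1 ⋯ A_{n-1} A_∞)` (columns `1, …, n`, i.e. the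
submatrix on `Fin.succ`) is invertible.  Then:
(1) `x` is a unit of `S` iff the numerator `(A_0 A_1 ⋯ A_{n-1})` (the submatrix
on `Fin.castSucc`) is invertible in `M_n(S)`;
(2) `x` is a regular element of `S` (neither a left nor a right zero divisor)
iff the numerator is a regular element of `M_n(S)`. -/
theorem cramer_rule_unit_and_regular
    {S : Type*} [Ring S] {n : ℕ} (hn : 0 < n)
    (A : Matrix (Fin n) (Fin (n + 1)) S) (u : Fin (n + 1) → S) (x : S)
    (hu0 : u 0 = 1) (huLast : u (Fin.last n) = x)
    (hAu : A.mulVec u = 0)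
    (hden : IsUnit (A.submatrix id Fin.succ)) :
    (IsUnit x ↔ IsUnit (A.submatrix id Fin.castSucc)) ∧
    (((∀ b : S, x * b = 0 → b = 0) ∧ (∀ b : S, b * x = 0 → b = 0)) ↔
      ((∀ B : Matrix (Fin n) (Fin n) S, A.submatrix id Fin.castSucc * B = 0 → B = 0) ∧
        (∀ B : Matrix (Fin n) (Fin n) S, B * A.submatrix id Fin.castSucc = 0 → B = 0))) := by
  obtain ⟨m, rfl⟩ : ∃ m, n = m + 1 := ⟨n - 1, (Nat.succ_pred_eq_of_pos hn).symm⟩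
  clear hn
  set D : Matrix (Fin (m + 1)) (Fin (m + 1)) S := A.submatrix id Fin.succ with hDdef
  set N : Matrix (Fin (m + 1)) (Fin (m + 1)) S := A.submatrix id Fin.castSucc with hNdef
  set v : Fin (m + 1) → S := fun i => u i.succ with hvdef
  have hzval : ((0 : Fin (m + 1)) : ℕ) = 0 := rfl
  have hlastval : ((Fin.last m : Fin (m + 1)) : ℕ) = m := rfl
  have hvlast : v (Fin.last m) = x := by
    rw [hvdef]; simpa [Fin.succ_last] using huLast
  set C : Matrix (Fin (m + 1)) (Fin (m + 1)) S := fun i j =>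
    (if (j : ℕ) = 0 then -v i else 0) + (if (i : ℕ) + 1 = (j : ℕ) then 1 else 0) with hCdef
  have hCval : ∀ i j, C i j =
      (if (j : ℕ) = 0 then -v i else 0) + (if (i : ℕ) + 1 = (j : ℕ) then 1 else 0) :=
    fun _ _ => rfl
  -- column 0 of A in terms of the others
  have hA0 : ∀ i, A i 0 = -∑ k : Fin (m + 1), A i k.succ * v k := by
    intro i
    have h := congrFun hAu i
    have h' : ∑ j, A i j * u j = 0 := h
    rw [Fin.sum_univ_succ, hu0, mul_one] at h'
    exact eq_neg_of_add_eq_zero_left h'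
  -- row formulas for C * B
  have hCB' : ∀ (B : Matrix (Fin (m + 1)) (Fin (m + 1)) S) (i k j : Fin (m + 1)),
      (i : ℕ) + 1 = (k : ℕ) → (C * B) i j = -(v i * B 0 j) + B k j := by
    intro B i k j hk
    rw [Matrix.mul_apply]
    simp only [hCval, add_mul, ite_mul, zero_mul, one_mul, neg_mul]
    rw [Finset.sum_add_distrib]
    congr 1
    · rw [sum_eq_of_single (0 : Fin (m + 1))
        (fun k' => if (k' : ℕ) = 0 then -(v i * B k' j) else 0)
        (fun k' hk' => if_neg (fun h => hk' (Fin.ext (h.trans hzval.symm))))]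
      rw [if_pos hzval]
    · rw [sum_eq_of_single k
        (fun k' => if (i : ℕ) + 1 = (k' : ℕ) then B k' j else 0)
        (fun k' hk' => if_neg (fun hc => hk' (Fin.ext (by omega))))]
      rw [if_pos hk]
  have hCBlast : ∀ (B : Matrix (Fin (m + 1)) (Fin (m + 1)) S) (j : Fin (m + 1)),
      (C * B) (Fin.last m) j = -(x * B 0 j) := by
    intro B j
    rw [Matrix.mul_apply]
    simp only [hCval, add_mul, ite_mul, zero_mul, one_mul, neg_mul]
    rw [Finset.sum_add_distrib]
    have h2 : (∑ k' : Fin (m + 1),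
        if ((Fin.last m : Fin (m + 1)) : ℕ) + 1 = (k' : ℕ) then B k' j else 0) = 0 :=
      Finset.sum_eq_zero fun k' _ => if_neg (by
        rw [hlastval]; have := k'.isLt; omega)
    rw [h2, add_zero, sum_eq_of_single (0 : Fin (m + 1))
      (fun k' => if (k' : ℕ) = 0 then -(v (Fin.last m) * B k' j) else 0)
      (fun k' hk' => if_neg (fun h => hk' (Fin.ext (h.trans hzval.symm))))]
    rw [if_pos hzval, hvlast]
  -- column formulas for B * C
  have hBC0 : ∀ (B : Matrix (Fin (m + 1)) (Fin (m + 1)) S) i, (B * C) i 0 =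
      -∑ k, B i k * v k := by
    intro B i
    rw [Matrix.mul_apply, ← Finset.sum_neg_distrib]
    refine Finset.sum_congr rfl fun k _ => ?_
    rw [hCval]
    simp
  have hBCs : ∀ (B : Matrix (Fin (m + 1)) (Fin (m + 1)) S) (i k j : Fin (m + 1)),
      (k : ℕ) + 1 = (j : ℕ) → (B * C) i j = B i k := by
    intro B i k j hk
    rw [Matrix.mul_apply]
    simp only [hCval, mul_add, mul_ite, mul_zero, mul_one, mul_neg]
    rw [Finset.sum_add_distrib]
    have h1 : (∑ k' : Fin (m + 1), if (j : ℕ) = 0 then -(B i k' * v k') else 0) = 0 :=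
      Finset.sum_eq_zero fun k' _ => if_neg (by omega)
    rw [h1, zero_add, sum_eq_of_single k
      (fun k' => if (k' : ℕ) + 1 = (j : ℕ) then B i k' else 0)
      (fun k' hk' => if_neg (fun hc => hk' (Fin.ext (by omega))))]
    rw [if_pos hk]
  -- N = D * C
  have hNC : N = D * C := by
    ext i j
    show A i (Fin.castSucc j) = (D * C) i j
    rcases Nat.eq_zero_or_pos (j : ℕ) with hj | hj
    · have hj0 : j = 0 := Fin.ext (hj.trans hzval.symm)
      rw [hj0, hBC0]
      show A i (Fin.castSucc 0) = _
      rw [Fin.castSucc_zero]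
      exact hA0 i
    · rw [hBCs D i ⟨(j : ℕ) - 1, by omega⟩ j (show (j : ℕ) - 1 + 1 = (j : ℕ) by omega)]
      show A i (Fin.castSucc j) = A i (Fin.succ ⟨(j : ℕ) - 1, by omega⟩)
      congr 1
      exact Fin.ext (show (j : ℕ) = (j : ℕ) - 1 + 1 by omega)
  -- regularity transfer between x and C
  have hxl_Cl : (∀ b : S, x * b = 0 → b = 0) →
      (∀ B : Matrix (Fin (m + 1)) (Fin (m + 1)) S, C * B = 0 → B = 0) := by
    intro hx B hB
    have hent : ∀ i j, (C * B) i j = 0 := fun i j => by rw [hB]; rfl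
    have h0 : ∀ j, B 0 j = 0 := by
      intro j
      have h := hent (Fin.last m) j
      rw [hCBlast, neg_eq_zero] at h
      exact hx _ h
    ext r j
    show B r j = 0
    rcases Nat.eq_zero_or_pos (r : ℕ) with hr | hr
    · have hr0 : r = 0 := Fin.ext (hr.trans hzval.symm)
      rw [hr0, h0]
    · have h := hent ⟨(r : ℕ) - 1, by omega⟩ j
      rw [hCB' B _ r j (show (r : ℕ) - 1 + 1 = (r : ℕ) by omega)] at h
      rwa [h0, mul_zero, neg_zero, zero_add] at h
  have hCl_xl : (∀ B : Matrix (Fin (m + 1)) (Fin (m + 1)) S, C * B = 0 → B = 0) →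
      (∀ b : S, x * b = 0 → b = 0) := by
    intro hC b hb
    obtain ⟨B, hBval⟩ : ∃ B : Matrix (Fin (m + 1)) (Fin (m + 1)) S, ∀ k j, B k j =
        if (j : ℕ) = 0 then (if (k : ℕ) = 0 then b else
          v ⟨(k : ℕ) - 1, Nat.lt_of_le_of_lt (Nat.sub_le _ _) k.isLt⟩ * b) else 0 :=
      ⟨_, fun _ _ => rfl⟩
    have hCB0 : C * B = 0 := by
      ext i j
      show (C * B) i j = 0
      rcases Nat.eq_zero_or_pos (j : ℕ) with hj | hj
      · have hB0j : B 0 j = b := by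
          rw [hBval, if_pos hj, if_pos hzval]
        rcases Nat.lt_or_ge (i : ℕ) m with h | h
        · rw [hCB' B i ⟨(i : ℕ) + 1, by omega⟩ j rfl, hB0j]
          have hBij : B ⟨(i : ℕ) + 1, by omega⟩ j = v i * b := by
            rw [hBval, if_pos hj, if_neg (show ¬((i : ℕ) + 1 = 0) by omega)]
            rfl
          rw [hBij, neg_add_cancel]
        · have hi : i = Fin.last m :=
            Fin.ext (show (i : ℕ) = m from by have := i.isLt; omega)
          rw [hi, hCBlast, hB0j, hb, neg_zero]
      · have hBz : ∀ k, B k j = 0 := fun k => by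
          rw [hBval, if_neg (by omega)]
        rcases Nat.lt_or_ge (i : ℕ) m with h | h
        · rw [hCB' B i ⟨(i : ℕ) + 1, by omega⟩ j rfl, hBz, hBz, mul_zero, neg_zero, zero_add]
        · have hi : i = Fin.last m :=
            Fin.ext (show (i : ℕ) = m from by have := i.isLt; omega)
          rw [hi, hCBlast, hBz, mul_zero, neg_zero]
    have hB0 := hC B hCB0
    have hb0 : B 0 0 = 0 := by rw [hB0]; rfl
    rw [hBval, if_pos hzval, if_pos hzval] at hb0
    exact hb0
  have hxr_Cr : (∀ b : S, b * x = 0 → b = 0) →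
      (∀ B : Matrix (Fin (m + 1)) (Fin (m + 1)) S, B * C = 0 → B = 0) := by
    intro hx B hB
    have hents : ∀ i j, (B * C) i j = 0 := fun i j => by rw [hB]; rfl
    have hsmall : ∀ i (k : Fin (m + 1)), (k : ℕ) < m → B i k = 0 := by
      intro i k hk
      have h := hents i ⟨(k : ℕ) + 1, by omega⟩
      rwa [hBCs B i k _ rfl] at h
    ext i k
    show B i k = 0
    rcases Nat.lt_or_ge (k : ℕ) m with hk | hk
    · exact hsmall i k hk
    · have hkl : k = Fin.last m := Fin.ext (show (k : ℕ) = m from by have := k.isLt; omega)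
      have h := hents i 0
      rw [hBC0, neg_eq_zero, sum_eq_of_single (Fin.last m) (fun k' => B i k' * v k')
        (fun k' hk' => by
          show B i k' * v k' = 0
          rw [hsmall i k' (by
            have h1 := k'.isLt
            have h2 : (k' : ℕ) ≠ m := fun hh => hk' (Fin.ext (show (k' : ℕ) = m from hh))
            omega), zero_mul]), hvlast] at h
      rw [hkl]
      exact hx _ h
  have hCr_xr : (∀ B : Matrix (Fin (m + 1)) (Fin (m + 1)) S, B * C = 0 → B = 0) →
      (∀ b : S, b * x = 0 → b = 0) := by
    intro hC b hb
    obtain ⟨B, hBval⟩ : ∃ B : Matrix (Fin (m + 1)) (Fin (m + 1)) S, ∀ i k, B i k =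
        if (i : ℕ) = 0 ∧ (k : ℕ) = m then b else 0 := ⟨_, fun _ _ => rfl⟩
    have hBC : B * C = 0 := by
      ext i j
      show (B * C) i j = 0
      rcases Nat.eq_zero_or_pos (j : ℕ) with hj | hj
      · have hj0 : j = 0 := Fin.ext (hj.trans hzval.symm)
        rw [hj0, hBC0, neg_eq_zero, sum_eq_of_single (Fin.last m) (fun k' => B i k' * v k')
          (fun k' hk' => by
            show B i k' * v k' = 0
            rw [hBval, if_neg (fun hh => hk' (Fin.ext (show (k' : ℕ) = m from hh.2))),
              zero_mul]),
          hvlast, hBval]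
        by_cases hi : (i : ℕ) = 0
        · rw [if_pos ⟨hi, hlastval⟩, hb]
        · rw [if_neg (fun hh => hi hh.1), zero_mul]
      · rw [hBCs B i ⟨(j : ℕ) - 1, by omega⟩ j (show (j : ℕ) - 1 + 1 = (j : ℕ) by omega),
          hBval, if_neg ?_]
        intro hh
        have h2 : (j : ℕ) - 1 = m := hh.2
        have := j.isLt
        omega
    have hB0 := hC B hBC
    have hb0 : B 0 (Fin.last m) = 0 := by rw [hB0]; rfl
    rw [hBval, if_pos ⟨hzval, hlastval⟩] at hb0
    exact hb0
  -- unit transfer between x and C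
  have hxu_Cu : IsUnit x → IsUnit C := by
    intro hx
    obtain ⟨xu, hxu⟩ := hx
    set y : S := ((xu⁻¹ : Sˣ) : S) with hy
    have hyx : y * x = 1 := by rw [hy, ← hxu]; exact xu.inv_mul
    have hxy : x * y = 1 := by rw [hy, ← hxu]; exact xu.mul_inv
    obtain ⟨E, hEval⟩ : ∃ E : Matrix (Fin (m + 1)) (Fin (m + 1)) S, ∀ i j, E i j =
        (if (i : ℕ) = (j : ℕ) + 1 then 1 else 0) +
          (if (j : ℕ) = m then (if (i : ℕ) = 0 then -y else
            -(v ⟨(i : ℕ) - 1, Nat.lt_of_le_of_lt (Nat.sub_le _ _) i.isLt⟩ * y)) else 0) :=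
      ⟨_, fun _ _ => rfl⟩
    have hEC : E * C = 1 := by
      ext i j
      show (E * C) i j = (1 : Matrix (Fin (m + 1)) (Fin (m + 1)) S) i j
      set w : S := (if (i : ℕ) = 0 then -y else
        -(v ⟨(i : ℕ) - 1, Nat.lt_of_le_of_lt (Nat.sub_le _ _) i.isLt⟩ * y)) with hw
      rcases Nat.eq_zero_or_pos (j : ℕ) with hj | hj
      · have hj0 : j = 0 := Fin.ext (hj.trans hzval.symm)
        rw [hj0, hBC0]
        have hsum : ∑ k : Fin (m + 1), E i k * v k =
            (∑ k : Fin (m + 1), (if (i : ℕ) = (k : ℕ) + 1 then (1 : S) else 0) * v k) +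
            (∑ k : Fin (m + 1), (if (k : ℕ) = m then w else 0) * v k) := by
          rw [← Finset.sum_add_distrib]
          exact Finset.sum_congr rfl fun k _ => by rw [hEval, ← hw, add_mul]
        have h2 : (∑ k : Fin (m + 1), (if (k : ℕ) = m then w else 0) * v k) = w * x := by
          rw [sum_eq_of_single (Fin.last m) (fun k => (if (k : ℕ) = m then w else 0) * v k)
            (fun k hk => by
              show (if (k : ℕ) = m then w else 0) * v k = 0
              rw [if_neg (fun hh => hk (Fin.ext (show (k : ℕ) = m from hh))), zero_mul])]
          show (if ((Fin.last m : Fin (m + 1)) : ℕ) = m then w else 0) * v (Fin.last m) = w * x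
          rw [if_pos hlastval, hvlast]
        rw [hsum, h2]
        by_cases hi : (i : ℕ) = 0
        · have h1 : (∑ k : Fin (m + 1), (if (i : ℕ) = (k : ℕ) + 1 then (1 : S) else 0) * v k) = 0 :=
            Finset.sum_eq_zero fun k _ => by rw [if_neg (by omega), zero_mul]
          rw [h1, zero_add, hw, if_pos hi, neg_mul, neg_neg, hyx]
          have hi0 : i = 0 := Fin.ext (hi.trans hzval.symm)
          rw [hi0]
          exact (Matrix.one_apply_eq 0).symm
        · have h1 : (∑ k : Fin (m + 1), (if (i : ℕ) = (k : ℕ) + 1 then (1 : S) else 0) * v k) =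
              v ⟨(i : ℕ) - 1, Nat.lt_of_le_of_lt (Nat.sub_le _ _) i.isLt⟩ := by
            rw [sum_eq_of_single
              (⟨(i : ℕ) - 1, Nat.lt_of_le_of_lt (Nat.sub_le _ _) i.isLt⟩ : Fin (m + 1))
              (fun k => (if (i : ℕ) = (k : ℕ) + 1 then (1 : S) else 0) * v k)
              (fun k hk => by
                show (if (i : ℕ) = (k : ℕ) + 1 then (1 : S) else 0) * v k = 0
                rw [if_neg (fun hc => hk (Fin.ext (show (k : ℕ) = (i : ℕ) - 1 by omega))),
                  zero_mul])]
            show (if (i : ℕ) = (i : ℕ) - 1 + 1 then (1 : S) else 0) * _ = _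
            rw [if_pos (by omega), one_mul]
          rw [h1, hw, if_neg hi, neg_mul, mul_assoc, hyx, mul_one, add_neg_cancel, neg_zero]
          refine (Matrix.one_apply_ne ?_).symm
          intro hh
          exact hi (by rw [hh, hzval])
      · rw [hBCs E i ⟨(j : ℕ) - 1, by omega⟩ j (show (j : ℕ) - 1 + 1 = (j : ℕ) by omega),
          hEval, if_neg (show ¬((j : ℕ) - 1 = m) from by have := j.isLt; omega), add_zero]
        by_cases hij : i = j
        · rw [if_pos (show (i : ℕ) = (j : ℕ) - 1 + 1 from by
            have : (i : ℕ) = (j : ℕ) := by rw [hij]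
            omega), hij, Matrix.one_apply_eq]
        · rw [if_neg (show ¬((i : ℕ) = (j : ℕ) - 1 + 1) from by
            have := Fin.val_ne_of_ne hij
            omega)]
          exact (Matrix.one_apply_ne hij).symm
    have hCrr : ∀ B : Matrix (Fin (m + 1)) (Fin (m + 1)) S, B * C = 0 → B = 0 :=
      hxr_Cr fun b hb => by
        have h : b * x * y = 0 := by rw [hb, zero_mul]
        rwa [mul_assoc, hxy, mul_one] at h
    have hCE : C * E = 1 := by
      have h1 : (C * E - 1) * C = 0 := by
        rw [sub_mul, one_mul, Matrix.mul_assoc, hEC, Matrix.mul_one, sub_self]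
      have h2 := hCrr _ h1
      rwa [sub_eq_zero] at h2
    exact ⟨⟨C, E, hCE, hEC⟩, rfl⟩
  have hCu_xu : IsUnit C → IsUnit x := by
    intro hC
    obtain ⟨Cu, hCu⟩ := hC
    set E : Matrix (Fin (m + 1)) (Fin (m + 1)) S := (Cu⁻¹).val with hEdef
    have hCE : C * E = 1 := by rw [hEdef, ← hCu]; exact Cu.mul_inv
    have hEC : E * C = 1 := by rw [hEdef, ← hCu]; exact Cu.inv_mul
    have hxw : x * -(E 0 (Fin.last m)) = 1 := by
      have h := congrFun (congrFun hCE (Fin.last m)) (Fin.last m)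
      rw [hCBlast, Matrix.one_apply_eq] at h
      rw [mul_neg]
      exact h
    have hxlr : ∀ b : S, x * b = 0 → b = 0 :=
      hCl_xl fun B hB => by
        have h : E * (C * B) = 0 := by rw [hB, Matrix.mul_zero]
        rwa [← Matrix.mul_assoc, hEC, Matrix.one_mul] at h
    have hwx : -(E 0 (Fin.last m)) * x = 1 := by
      have h1 : x * (-(E 0 (Fin.last m)) * x - 1) = 0 := by
        rw [mul_sub, mul_one, ← mul_assoc, hxw, one_mul, sub_self]
      have h2 := hxlr _ h1
      rwa [sub_eq_zero] at h2
    exact ⟨⟨x, -(E 0 (Fin.last m)), hxw, hwx⟩, rfl⟩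
  -- transfer from C to N
  have hDD' : D * (hden.unit⁻¹).val = 1 := hden.mul_val_inv
  have hD'D : (hden.unit⁻¹).val * D = 1 := hden.val_inv_mul
  have hCu_Nu : IsUnit C ↔ IsUnit N := by
    constructor
    · intro h
      rw [hNC]
      exact hden.mul h
    · intro h
      have hCeq : C = (hden.unit⁻¹).val * N := by
        rw [hNC, ← Matrix.mul_assoc, hD'D, Matrix.one_mul]
      rw [hCeq]
      exact (Units.isUnit _).mul h
  have hl_iff : (∀ B : Matrix (Fin (m + 1)) (Fin (m + 1)) S, C * B = 0 → B = 0) ↔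
      (∀ B : Matrix (Fin (m + 1)) (Fin (m + 1)) S, N * B = 0 → B = 0) := by
    constructor
    · intro h B hB
      apply h
      have h3 : (hden.unit⁻¹).val * (N * B) = 0 := by
        rw [hB, Matrix.mul_zero]
      rwa [hNC, ← Matrix.mul_assoc, ← Matrix.mul_assoc, hD'D, Matrix.one_mul] at h3
    · intro h B hB
      apply h
      rw [hNC, Matrix.mul_assoc, hB, Matrix.mul_zero]
  have hr_iff : (∀ B : Matrix (Fin (m + 1)) (Fin (m + 1)) S, B * C = 0 → B = 0) ↔
      (∀ B : Matrix (Fin (m + 1)) (Fin (m + 1)) S, B * N = 0 → B = 0) := by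
    constructor
    · intro h B hB
      have h1 : (B * D) * C = 0 := by rw [Matrix.mul_assoc, ← hNC, hB]
      have h2 := h _ h1
      have h3 : B * D * (hden.unit⁻¹).val = 0 := by
        rw [h2, Matrix.zero_mul]
      rwa [Matrix.mul_assoc, hDD', Matrix.mul_one] at h3
    · intro h B hB
      have h1 : (B * (hden.unit⁻¹).val) * N = 0 := by
        rw [hNC, ← Matrix.mul_assoc, Matrix.mul_assoc B _ D, hD'D, Matrix.mul_one, hB]
      have h2 := h _ h1
      have h3 : B * (hden.unit⁻¹).val * D = 0 := by
        rw [h2, Matrix.zero_mul]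
      rwa [Matrix.mul_assoc, hD'D, Matrix.mul_one] at h3
  constructor
  · exact ⟨fun h => hCu_Nu.1 (hxu_Cu h), fun h => hCu_xu (hCu_Nu.2 h)⟩
  · constructor
    · rintro ⟨h1, h2⟩
      exact ⟨hl_iff.1 (hxl_Cl h1), hr_iff.1 (hxr_Cr h2)⟩
    · rintro ⟨h1, h2⟩
      exact ⟨hCl_xl (hl_iff.2 h1), hCr_xr (hr_iff.2 h2)⟩
end

section
/- Let S be a ring and n ≥ 1. Let A be an n×(n+1) matrix over S with columns A_0, A_1, …, A_{n-1}, A_∞ (in this order), and let u ∈ S^{n+1} be a column vector with first entry u_0 = 1 and last entry u_∞ = x such that A·u = 0. Assume that the n×n denominator matrix (A_1 ⋯ A_{n-1} A_∞) is invertible in M_n(S). If x = 0, then the numerator matrix N = (A_0 A_1 ⋯ A_{n-1}) is not full: there exist an n×(n-1) matrix P and an (n-1)×n matrix Q over S with N = PQ. Moreover, if Γ is a group, S is a Γ-graded ring, and A is homogeneous of distribution (ᾱ, β̄) with β_0 = e, then P and Q can be chosen homogeneous with compatible distributions, so that N is not gr-full over S. -/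
open Matrix

universe u v w

/-! When the last entry of `u` vanishes, `A u = 0` says that column `0` of the numerator `N` is
a right linear combination of its columns `1, …, n-1`, so `N` factors through `S^{n-1}` as
`N = (A_1 ⋯ A_{n-1}) · [-w | 1]`. In the graded case, the coefficients are replaced by their
homogeneous components of the degrees `β_k`; since `N` is homogeneous and `β_0 = e`, taking the
degree-`α_i` component of row `i` of that relation shows that these components still work,
and the factor `[-w | 1]` is then homogeneous. -/

namespace Matrix

variable {ι S : Type*} [Ring S] {m : ℕ}

def negColCons (w : Fin m → S) : Matrix (Fin m) (Fin (m + 1)) S :=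
  Matrix.of fun k => Fin.cons (-w k) ((1 : Matrix (Fin m) (Fin m) S) k)

theorem mulVec_eq_mulVec_castSucc_of_last_eq_zero
    (A : Matrix ι (Fin (m + 1)) S) {u : Fin (m + 1) → S} (hu : u (Fin.last m) = 0) :
    A *ᵥ u = A.submatrix id Fin.castSucc *ᵥ (u ∘ Fin.castSucc) := by
  ext i
  simp [mulVec, dotProduct, Fin.sum_univ_castSucc, hu]

theorem col_zero_add_sum_eq_zero_of_mulVec_eq_zero (N : Matrix ι (Fin (m + 1)) S)
    {v : Fin (m + 1) → S} (hv : N *ᵥ v = 0) (hv0 : v 0 = 1) (i : ι) :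
    N i 0 + ∑ k : Fin m, N i k.succ * v k.succ = 0 := by
  simpa [mulVec, dotProduct, Fin.sum_univ_succ, hv0] using congrFun hv i

theorem eq_submatrix_succ_mul_negColCons (N : Matrix ι (Fin (m + 1)) S) (w : Fin m → S)
    (h : ∀ i, N i 0 + ∑ k : Fin m, N i k.succ * w k = 0) :
    N = N.submatrix id Fin.succ * negColCons w := by
  ext i j
  cases j using Fin.cases with
  | zero => simp [negColCons, mul_apply, eq_neg_of_add_eq_zero_left (h i)]
  | succ t => simp [negColCons, mul_apply, one_apply]

end Matrix

section Graded

open DirectSum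

variable {Γ S : Type*} [Group Γ] [Ring S] {𝒜 : Γ → AddSubgroup S}

theorem isHomog_negColCons (h1 : (1 : S) ∈ 𝒜 1) {m : ℕ} {β : Fin (m + 1) → Γ} (hβ0 : β 0 = 1)
    {w : Fin m → S} (hw : ∀ k, w k ∈ 𝒜 (β k.succ)) :
    IsHomog 𝒜 (negColCons w) (β ∘ Fin.succ) β := by
  intro k j
  cases j using Fin.cases with
  | zero => simpa [negColCons, hβ0] using neg_mem (hw k)
  | succ t =>
    rcases eq_or_ne k t with rfl | hkt
    · simpa [negColCons] using h1
    · simp [negColCons, one_apply_ne hkt]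

variable (𝒜) [DecidableEq Γ] [Decomposition 𝒜]

theorem coe_decompose_mul_mul_of_left_mem
    (hmul : ∀ {γ δ : Γ} {a b : S}, a ∈ 𝒜 γ → b ∈ 𝒜 δ → a * b ∈ 𝒜 (γ * δ))
    {δ : Γ} {a : S} (ha : a ∈ 𝒜 δ) (γ : Γ) (x : S) :
    (decompose 𝒜 (a * x) (δ * γ) : S) = a * decompose 𝒜 x γ := by
  induction x using Decomposition.inductionOn 𝒜 with
  | zero => simp
  | @homogeneous γ' z =>
    rcases eq_or_ne γ' γ with rfl | hne
    · rw [decompose_of_mem_same 𝒜 z.2, decompose_of_mem_same 𝒜 (hmul ha z.2)]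
    · rw [decompose_of_mem_ne 𝒜 z.2 hne, mul_zero,
        decompose_of_mem_ne 𝒜 (hmul ha z.2) (mul_right_injective δ |>.ne hne)]
  | add x y hx hy =>
    simp only [mul_add, decompose_add, DirectSum.add_apply, AddMemClass.coe_add, hx, hy]

variable {𝒜}

theorem col_zero_add_sum_decompose_eq_zero
    (hmul : ∀ {γ δ : Γ} {a b : S}, a ∈ 𝒜 γ → b ∈ 𝒜 δ → a * b ∈ 𝒜 (γ * δ))
    {p m : ℕ} {N : Matrix (Fin p) (Fin (m + 1)) S} {α : Fin p → Γ}
    {β : Fin (m + 1) → Γ} (hN : IsHomog 𝒜 N α β) (hβ0 : β 0 = 1) {v : Fin m → S}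
    (h : ∀ i, N i 0 + ∑ k : Fin m, N i k.succ * v k = 0) (i : Fin p) :
    N i 0 + ∑ k : Fin m, N i k.succ * decompose 𝒜 (v k) (β k.succ) = 0 := by
  have hN0 : N i 0 ∈ 𝒜 (α i) := by simpa [hβ0] using hN i 0
  have hterm (k : Fin m) :
      (decompose 𝒜 (N i k.succ * v k) (α i) : S) = N i k.succ * decompose 𝒜 (v k) (β k.succ) := by
    rw [← coe_decompose_mul_mul_of_left_mem 𝒜 hmul (hN i k.succ), inv_mul_cancel_right]
  simpa [decompose_add, decompose_sum, decompose_of_mem_same 𝒜 hN0, hterm] using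
    congrArg (fun x => (decompose 𝒜 x (α i) : S)) (h i)

end Graded

theorem cramer_rule_numerator_not_full_general
    {S : Type v} [Ring S] {n : ℕ} (hn : 0 < n)
    (A : Matrix (Fin n) (Fin (n + 1)) S) (u : Fin (n + 1) → S)
    (hu0 : u 0 = 1) (huLast : u (Fin.last n) = 0)
    (hAu : A.mulVec u = 0) :
    (∃ (P : Matrix (Fin n) (Fin (n - 1)) S) (Q : Matrix (Fin (n - 1)) (Fin n) S),
        A.submatrix id Fin.castSucc = P * Q) ∧
    (∀ (Γ : Type u) [Group Γ] [DecidableEq Γ] (𝒜 : Γ → AddSubgroup S),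
        DirectSum.IsInternal 𝒜 → (1 : S) ∈ 𝒜 1 →
        (∀ {γ δ : Γ} {a b : S}, a ∈ 𝒜 γ → b ∈ 𝒜 δ → a * b ∈ 𝒜 (γ * δ)) →
        ∀ (α : Fin n → Γ) (β : Fin (n + 1) → Γ),
          IsHomog 𝒜 A α β → β 0 = 1 →
          ∃ (lam : Fin (n - 1) → Γ) (P : Matrix (Fin n) (Fin (n - 1)) S)
            (Q : Matrix (Fin (n - 1)) (Fin n) S),
            IsHomog 𝒜 P α lam ∧ IsHomog 𝒜 Q lam (β ∘ Fin.castSucc) ∧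
            A.submatrix id Fin.castSucc = P * Q ∧ ¬ IsGrFull 𝒜 (A.submatrix id Fin.castSucc)) := by
  obtain ⟨m, rfl⟩ := Nat.exists_eq_succ_of_ne_zero hn.ne'
  set N := A.submatrix id Fin.castSucc
  have hNu : N *ᵥ (u ∘ Fin.castSucc) = 0 := by
    rw [← mulVec_eq_mulVec_castSucc_of_last_eq_zero A huLast, hAu]
  have hcol := col_zero_add_sum_eq_zero_of_mulVec_eq_zero N hNu hu0
  refine ⟨⟨_, _, eq_submatrix_succ_mul_negColCons N _ hcol⟩, ?_⟩
  intro Γ _ _ 𝒜 internal h1 hmul α β hA hβ0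
  let _ : DirectSum.Decomposition 𝒜 := internal.chooseDecomposition
  have hN : IsHomog 𝒜 N α (β ∘ Fin.castSucc) := fun i j => hA i j.castSucc
  have hP : IsHomog 𝒜 (N.submatrix id Fin.succ) α (β ∘ Fin.castSucc ∘ Fin.succ) :=
    fun i k => hN i k.succ
  have hQ : IsHomog 𝒜 (negColCons fun k => DirectSum.decompose 𝒜 (u k.succ.castSucc)
      (β k.succ.castSucc)) (β ∘ Fin.castSucc ∘ Fin.succ) (β ∘ Fin.castSucc) :=
    isHomog_negColCons (β := β ∘ Fin.castSucc) h1 hβ0 fun k => (DirectSum.decompose 𝒜 _ _).2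
  have hPQ := eq_submatrix_succ_mul_negColCons N _
    (col_zero_add_sum_decompose_eq_zero hmul hN hβ0 hcol)
  exact ⟨_, _, _, hP, hQ, hPQ, fun hfull => (hfull m _ _ _ _ _ hP hQ hPQ).not_gt m.lt_succ_self⟩

/-- **Cramer's rule, part (3).** Let `S` be a ring, `n ≥ 1`,
`A` an `n × (n+1)` matrix over `S`, and `u ∈ S^{n+1}` with `u 0 = 1`,
last entry `x = 0` and `A · u = 0`; assume the denominator (columns `1, …, n`)
is invertible.  Then the numerator `N` (columns `0, …, n-1`) is not full:
`N = P * Q` with `P` of size `n × (n-1)` and `Q` of size `(n-1) × n`.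
Moreover, if `Γ` is a group, `S` is a `Γ`-graded ring and `A` is homogeneous
of distribution `(α, β)` with `β 0 = 1`, then `P` and `Q` may be chosen
homogeneous with compatible distributions, so `N` is not gr-full over `S`. -/
theorem cramer_rule_numerator_not_full
    {S : Type v} [Ring S] {n : ℕ} (hn : 0 < n)
    (A : Matrix (Fin n) (Fin (n + 1)) S) (u : Fin (n + 1) → S)
    (hu0 : u 0 = 1) (huLast : u (Fin.last n) = 0)
    (hAu : A.mulVec u = 0)
    (hden : IsUnit (A.submatrix id Fin.succ)) :
    (∃ (P : Matrix (Fin n) (Fin (n - 1)) S) (Q : Matrix (Fin (n - 1)) (Fin n) S),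
        A.submatrix id Fin.castSucc = P * Q) ∧
    (∀ (Γ : Type u) [Group Γ] [DecidableEq Γ] (𝒜 : Γ → AddSubgroup S),
        DirectSum.IsInternal 𝒜 → (1 : S) ∈ 𝒜 1 →
        (∀ {γ δ : Γ} {a b : S}, a ∈ 𝒜 γ → b ∈ 𝒜 δ → a * b ∈ 𝒜 (γ * δ)) →
        ∀ (α : Fin n → Γ) (β : Fin (n + 1) → Γ),
          IsHomog 𝒜 A α β → β 0 = 1 →
          ∃ (lam : Fin (n - 1) → Γ) (P : Matrix (Fin n) (Fin (n - 1)) S)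
            (Q : Matrix (Fin (n - 1)) (Fin n) S),
            IsHomog 𝒜 P α lam ∧ IsHomog 𝒜 Q lam (β ∘ Fin.castSucc) ∧
            A.submatrix id Fin.castSucc = P * Q ∧ ¬ IsGrFull 𝒜 (A.submatrix id Fin.castSucc)) :=
  cramer_rule_numerator_not_full_general hn A u hu0 huLast hAu
end

section
/- Let Γ be a group, R a Γ-graded ring, S a ring, Σ ⊆ 𝔐(R) a gr-lower semimultiplicative set, and f : R → S a Σ-inverting ring homomorphism. Then: (1) f(R_γ) ⊆ (Q_f(Σ))_γ for every γ ∈ Γ; (2) if x, y ∈ (Q_f(Σ))_γ then x + y ∈ (Q_f(Σ))_γ; (3) if x ∈ (Q_f(Σ))_γ and y ∈ (Q_f(Σ))_δ then x·y ∈ (Q_f(Σ))_{γδ}. Consequently, the additive subgroup of S generated by ⋃_{γ∈Γ} (Q_f(Σ))_γ is a subring of S containing the image of f. -/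
open Matrix

universe u v w

section Helpers

variable {Γ : Type u} [Group Γ] {R : Type v} [Ring R] {S : Type w} [Ring S]

lemma homog_shift {𝒜 : Γ → AddSubgroup R} {m n : ℕ} {A : Matrix (Fin m) (Fin n) R}
    {α : Fin m → Γ} {β : Fin n → Γ} (h : IsHomog 𝒜 A α β) (d : Γ) :
    IsHomog 𝒜 A (fun i => α i * d) (fun j => β j * d) := by
  intro i j
  show A i j ∈ 𝒜 (α i * d * (β j * d)⁻¹)
  have e : α i * d * (β j * d)⁻¹ = α i * (β j)⁻¹ := by group
  rw [e]; exact h i j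

lemma stdBasis_map (f : R →+* S) {m' n' : Type*} [DecidableEq m'] [DecidableEq n']
    (a : m') (b : n') :
    (Matrix.single a b (1 : R)).map f = Matrix.single a b (1 : S) := by
  ext k l
  simp [Matrix.single, Matrix.map_apply, apply_ite f]

lemma matrix_map_neg (f : R →+* S) {m' n' : Type*} (M : Matrix m' n' R) :
    (-M).map f = -(M.map f) := by
  ext k l; simp [Matrix.map_apply]

lemma matrix_map_add (f : R →+* S) {m' n' : Type*} (M N : Matrix m' n' R) :
    (M + N).map f = M.map f + N.map f := by
  ext k l; simp [Matrix.map_apply]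

lemma stdMul_left {p q r : Type*} [Fintype q] [DecidableEq p] [DecidableEq q]
    (a : p) (b : q) (M : Matrix q r S) (k : p) (c : r) :
    (Matrix.single a b (1 : S) * M) k c = if k = a then M b c else 0 := by
  rw [Matrix.mul_apply]
  by_cases h : k = a
  · subst h
    simp [Matrix.single, ite_and, boole_mul, Finset.sum_ite_eq]
  · simp [Matrix.single, Ne.symm h, h]

lemma stdMul_right {p q r : Type*} [Fintype q] [DecidableEq q] [DecidableEq r]
    (a : q) (b : r) (M : Matrix p q S) (k : p) (c : r) :
    (M * Matrix.single a b (1 : S)) k c = if c = b then M k a else 0 := by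
  rw [Matrix.mul_apply]
  by_cases h : c = b
  · subst h
    simp [Matrix.single, ite_and, mul_boole, Finset.sum_ite_eq']
  · simp [Matrix.single, Ne.symm h, h]

lemma mul_std_mul {p q : Type*} [Fintype p] [Fintype q] [DecidableEq p] [DecidableEq q]
    (X : Matrix p p S) (X' : Matrix q q S) (i : p) (j' : q) (j : p) (i' : q) :
    (X * Matrix.single i j' (1 : S) * X') j i' = X j i * X' j' i' := by
  rw [Matrix.mul_assoc, Matrix.mul_apply]
  have h : ∀ k, (Matrix.single i j' (1 : S) * X') k i'
      = if k = i then X' j' i' else 0 := fun k => stdMul_left i j' X' k i'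
  simp only [h, mul_ite, mul_zero]
  simp [Finset.sum_ite_eq']

lemma lowerBlockSum_isHomog {𝒜 : Γ → AddSubgroup R} {n m : ℕ}
    {A : Matrix (Fin n) (Fin n) R} {B : Matrix (Fin m) (Fin m) R}
    {C : Matrix (Fin m) (Fin n) R} {α β : Fin n → Γ} {α' β' : Fin m → Γ}
    (hA : IsHomog 𝒜 A α β) (hB : IsHomog 𝒜 B α' β') (hC : IsHomog 𝒜 C α' β) :
    IsHomog 𝒜 (lowerBlockSum A B C)
      (Sum.elim α α' ∘ finSumFinEquiv.symm) (Sum.elim β β' ∘ finSumFinEquiv.symm) := by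
  intro a b
  simp only [lowerBlockSum, Matrix.reindex_apply, Matrix.submatrix_apply, Function.comp_apply]
  rcases ha : finSumFinEquiv.symm a with x | x <;> rcases hb : finSumFinEquiv.symm b with y | y <;>
    simp only [ha, hb, Matrix.fromBlocks_apply₁₁, Matrix.fromBlocks_apply₁₂,
      Matrix.fromBlocks_apply₂₁, Matrix.fromBlocks_apply₂₂, Sum.elim_inl, Sum.elim_inr,
      Matrix.zero_apply]
  exacts [hA x y, (𝒜 _).zero_mem, hC x y, hB x y]

lemma lowerBlockSum_map (f : R →+* S) {n m : ℕ}
    (A : Matrix (Fin n) (Fin n) R) (B : Matrix (Fin m) (Fin m) R)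
    (C : Matrix (Fin m) (Fin n) R) :
    (lowerBlockSum A B C).map f =
      Matrix.reindex finSumFinEquiv finSumFinEquiv
        (Matrix.fromBlocks (A.map f) 0 (C.map f) (B.map f)) := by
  ext a b
  simp only [lowerBlockSum, Matrix.reindex_apply, Matrix.submatrix_apply, Matrix.map_apply]
  rcases finSumFinEquiv.symm a with x | x <;> rcases finSumFinEquiv.symm b with y | y <;>
    simp [Matrix.map_apply]

/-- Workhorse: the lower-left entry of the inverse of a block lower triangular
matrix built from `Sig`-data belongs to the rational closure. -/
lemma key_mem {𝒜 : Γ → AddSubgroup R} {Sig : Set (SqMat R)} {f : R →+* S}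
    (hSig : IsGrLowerSemimult 𝒜 Sig)
    {n m : ℕ} {A : Matrix (Fin n) (Fin n) R} {A' : Matrix (Fin m) (Fin m) R}
    (C : Matrix (Fin m) (Fin n) R)
    {α β : Fin n → Γ} {α' β' : Fin m → Γ}
    {X : Matrix (Fin n) (Fin n) S} {X' : Matrix (Fin m) (Fin m) S}
    (hA : (⟨n, A⟩ : SqMat R) ∈ Sig) (hA' : (⟨m, A'⟩ : SqMat R) ∈ Sig)
    (hhA : IsHomog 𝒜 A α β) (hhA' : IsHomog 𝒜 A' α' β') (hhC : IsHomog 𝒜 C α' β)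
    (hX1 : A.map f * X = 1) (hX2 : X * A.map f = 1)
    (hX'1 : A'.map f * X' = 1) (hX'2 : X' * A'.map f = 1)
    (i : Fin n) (j' : Fin m) :
    (-(X' * C.map f * X)) j' i ∈ RatCl 𝒜 Sig f (β' j' * (α i)⁻¹) := by
  classical
  set Z : Matrix (Fin m) (Fin n) S := -(X' * C.map f * X) with hZ
  refine ⟨n + m, lowerBlockSum A A' C,
    Sum.elim α α' ∘ finSumFinEquiv.symm, Sum.elim β β' ∘ finSumFinEquiv.symm,
    finSumFinEquiv (Sum.inl i), finSumFinEquiv (Sum.inr j'),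
    Matrix.reindex finSumFinEquiv finSumFinEquiv (Matrix.fromBlocks X 0 Z X'),
    hSig.2 A A' α β α' β' C hA hA' hhA hhA' hhC,
    lowerBlockSum_isHomog hhA hhA' hhC, ?_, ?_, ?_, ?_⟩
  · simp
  · have hz : A'.map f * Z = -(C.map f * X) := by
      rw [hZ, Matrix.mul_neg, ← Matrix.mul_assoc, ← Matrix.mul_assoc, hX'1, Matrix.one_mul]
    rw [lowerBlockSum_map, Matrix.reindex_apply, Matrix.reindex_apply,
      Matrix.submatrix_mul_equiv, Matrix.fromBlocks_multiply, hX1, hX'1, hz]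
    simp [Matrix.fromBlocks_one]
  · have hz : Z * A.map f = -(X' * C.map f) := by
      rw [hZ, Matrix.neg_mul, Matrix.mul_assoc, hX2, Matrix.mul_one]
    rw [lowerBlockSum_map, Matrix.reindex_apply, Matrix.reindex_apply,
      Matrix.submatrix_mul_equiv, Matrix.fromBlocks_multiply, hX2, hX'2, hz]
    simp [Matrix.fromBlocks_one]
  · simp [hZ]

end Helpers

/-- Let `R` be a `Γ`-graded ring, `S` a ring, `Sig` a
gr-lower semimultiplicative set of square homogeneous matrices over `R`, and
`f : R → S` a `Sig`-inverting ring homomorphism.  Then: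
(1) `f (𝒜 γ) ⊆ (Q_f(Sig))_γ`;
(2) each `(Q_f(Sig))_γ` is closed under addition;
(3) `(Q_f(Sig))_γ * (Q_f(Sig))_δ ⊆ (Q_f(Sig))_{γδ}`.
Consequently the additive subgroup of `S` generated by `⋃ γ, (Q_f(Sig))_γ` is a
subring of `S` containing the image of `f`. -/
theorem graded_rational_closure_is_subring
    {Γ : Type u} [Group Γ] [DecidableEq Γ] {R : Type v} [Ring R] {S : Type w} [Ring S]
    (𝒜 : Γ → AddSubgroup R)
    (hinternal : DirectSum.IsInternal 𝒜)
    (hone : (1 : R) ∈ 𝒜 1)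
    (hmul : ∀ {γ δ : Γ} {x y : R}, x ∈ 𝒜 γ → y ∈ 𝒜 δ → x * y ∈ 𝒜 (γ * δ))
    (Sig : Set (SqMat R)) (hSig : IsGrLowerSemimult 𝒜 Sig)
    (f : R →+* S) (hf : ∀ p ∈ Sig, IsUnit ((p.2).map ⇑f)) :
    (∀ (γ : Γ) (r : R), r ∈ 𝒜 γ → f r ∈ RatCl 𝒜 Sig f γ) ∧
    (∀ (γ : Γ) (x y : S),
        x ∈ RatCl 𝒜 Sig f γ → y ∈ RatCl 𝒜 Sig f γ → x + y ∈ RatCl 𝒜 Sig f γ) ∧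
    (∀ (γ δ : Γ) (x y : S),
        x ∈ RatCl 𝒜 Sig f γ → y ∈ RatCl 𝒜 Sig f δ → x * y ∈ RatCl 𝒜 Sig f (γ * δ)) ∧
    (∃ T : Subring S,
        T.toAddSubgroup = AddSubgroup.closure (⋃ γ : Γ, RatCl 𝒜 Sig f γ) ∧
        Set.range ⇑f ⊆ (T : Set S)) := by
  classical
  have hid_map : (1 : Matrix (Fin 1) (Fin 1) R).map f = 1 :=
    Matrix.map_one f (map_zero f) (map_one f)
  have hid1 : (1 : Matrix (Fin 1) (Fin 1) R).map f * 1 = 1 := by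
    rw [hid_map, Matrix.mul_one]
  have hid2 : (1 : Matrix (Fin 1) (Fin 1) S) * (1 : Matrix (Fin 1) (Fin 1) R).map f = 1 := by
    rw [hid_map, Matrix.mul_one]
  have hhomog_one : ∀ c : Γ, IsHomog 𝒜 (1 : Matrix (Fin 1) (Fin 1) R)
      (fun _ => c) (fun _ => c) := by
    intro c i j
    rw [Subsingleton.elim i j, Matrix.one_apply_eq]
    have : c * c⁻¹ = 1 := mul_inv_cancel c
    rw [this]; exact hone
  -- Part 1
  have p1 : ∀ (γ : Γ) (r : R), r ∈ 𝒜 γ → f r ∈ RatCl 𝒜 Sig f γ := by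
    intro γ r hr
    set C : Matrix (Fin 1) (Fin 1) R := Matrix.of fun _ _ => -r with hC
    have hhC : IsHomog 𝒜 C (fun _ => γ) (fun _ => (1 : Γ)) := by
      intro i j
      show -r ∈ 𝒜 (γ * (1 : Γ)⁻¹)
      rw [inv_one, mul_one]
      exact neg_mem hr
    have hk := key_mem (X := (1 : Matrix (Fin 1) (Fin 1) S))
      (X' := (1 : Matrix (Fin 1) (Fin 1) S)) hSig C hSig.1 hSig.1
      (hhomog_one 1) (hhomog_one γ) hhC hid1 hid2 hid1 hid2 0 0
    rw [Matrix.one_mul, Matrix.mul_one, inv_one, mul_one] at hk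
    simpa [hC, Matrix.neg_apply, Matrix.map_apply] using hk
  -- Part 2
  have p2 : ∀ (γ : Γ) (x y : S),
      x ∈ RatCl 𝒜 Sig f γ → y ∈ RatCl 𝒜 Sig f γ → x + y ∈ RatCl 𝒜 Sig f γ := by
    intro γ x y hx hy
    obtain ⟨n, A, α, β, i, j, X, hA, hhA, hdeg, hX1, hX2, hXv⟩ := hx
    obtain ⟨m, A', α', β', i', j', X', hA', hhA', hdeg', hX'1, hX'2, hX'v⟩ := hy
    set d : Γ := (β' j')⁻¹ * β j with hd
    have key_eq : β' j' * (α' i')⁻¹ = β j * (α i)⁻¹ := by rw [hdeg, hdeg']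
    have h2 : (α' i')⁻¹ = (β' j')⁻¹ * (β j * (α i)⁻¹) := by
      rw [← key_eq, inv_mul_cancel_left]
    have h3 : α' i' = ((β' j')⁻¹ * (β j * (α i)⁻¹))⁻¹ := by rw [← h2, inv_inv]
    have ha : α' i' * d = α i := by rw [h3, hd]; group
    have hb : β' j' * d = β j := by rw [hd, mul_inv_cancel_left]
    set C : Matrix (Fin m) (Fin n) R :=
      -(A' * Matrix.single j' j (1 : R) + Matrix.single i' i (1 : R) * A)
      with hCdef
    have hhC : IsHomog 𝒜 C (fun k => α' k * d) β := by
      intro k l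
      show C k l ∈ _
      have e1 : (A' * Matrix.single j' j (1 : R)) k l
          = if l = j then A' k j' else 0 := stdMul_right j' j A' k l
      have e2 : (Matrix.single i' i (1 : R) * A) k l
          = if k = i' then A i l else 0 := stdMul_left i' i A k l
      rw [hCdef]
      simp only [Matrix.neg_apply, Matrix.add_apply, e1, e2]
      refine neg_mem (add_mem ?_ ?_)
      · split_ifs with h
        · show A' k j' ∈ 𝒜 (α' k * d * (β l)⁻¹)
          have e3 : α' k * d * (β l)⁻¹ = α' k * (β' j')⁻¹ := by rw [h, hd]; group
          rw [e3]
          exact hhA' k j'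
        · exact zero_mem _
      · split_ifs with h
        · show A i l ∈ 𝒜 (α' k * d * (β l)⁻¹)
          rw [h, ha]
          exact hhA i l
        · exact zero_mem _
    have hk := key_mem hSig C hA hA' hhA (homog_shift hhA' d)
      hhC hX1 hX2 hX'1 hX'2 i j'
    have hCf : C.map f =
        -(A'.map f * Matrix.single j' j (1 : S)
          + Matrix.single i' i (1 : S) * A.map f) := by
      rw [hCdef, matrix_map_neg, matrix_map_add, Matrix.map_mul, Matrix.map_mul,
        stdBasis_map, stdBasis_map]
    have hval : -(X' * C.map f * X) =
        Matrix.single j' j (1 : S) * X + X' * Matrix.single i' i (1 : S) := by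
      rw [hCf, Matrix.mul_neg, Matrix.neg_mul, neg_neg, Matrix.mul_add, Matrix.add_mul]
      congr 1
      · rw [← Matrix.mul_assoc X' (A'.map f) (Matrix.single j' j (1 : S)), hX'2,
          Matrix.one_mul]
      · rw [← Matrix.mul_assoc X' (Matrix.single i' i (1 : S)) (A.map f),
          Matrix.mul_assoc (X' * Matrix.single i' i (1 : S)) (A.map f) X, hX1,
          Matrix.mul_one]
    have hent : (-(X' * C.map f * X)) j' i = x + y := by
      rw [hval]
      rw [Matrix.add_apply, stdMul_left j' j X j' i, stdMul_right i' i X' j' i]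
      simp [hXv, hX'v]
    have hdeg2 : (fun k => β' k * d) j' * (α i)⁻¹ = γ := by
      show β' j' * d * (α i)⁻¹ = γ
      rw [hb, hdeg]
    rw [hent, hdeg2] at hk
    exact hk
  -- Part 3
  have p3 : ∀ (γ δ : Γ) (x y : S),
      x ∈ RatCl 𝒜 Sig f γ → y ∈ RatCl 𝒜 Sig f δ → x * y ∈ RatCl 𝒜 Sig f (γ * δ) := by
    intro γ δ x y hx hy
    obtain ⟨n, A, α, β, i, j, X, hA, hhA, hdeg, hX1, hX2, hXv⟩ := hx
    obtain ⟨m, A', α', β', i', j', X', hA', hhA', hdeg', hX'1, hX'2, hX'v⟩ := hy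
    set d : Γ := (α i)⁻¹ * β' j' with hd
    have ha : α i * d = β' j' := by rw [hd, mul_inv_cancel_left]
    set C : Matrix (Fin n) (Fin m) R := -(Matrix.single i j' (1 : R)) with hCdef
    have hhC : IsHomog 𝒜 C (fun k => α k * d) β' := by
      intro k l
      show C k l ∈ _
      rw [hCdef]
      simp only [Matrix.neg_apply]
      refine neg_mem ?_
      show Matrix.single i j' (1 : R) k l ∈ 𝒜 (α k * d * (β' l)⁻¹)
      by_cases h1 : k = i
      · by_cases h2 : l = j'
        · rw [h1, h2, Matrix.single_apply_same]
          have e3 : α i * d * (β' j')⁻¹ = 1 := by rw [ha, mul_inv_cancel]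
          rw [e3]; exact hone
        · rw [Matrix.single_apply_of_ne _ _ _ _ _ (by tauto)]
          exact zero_mem _
      · rw [Matrix.single_apply_of_ne _ _ _ _ _ (by tauto)]
        exact zero_mem _
    have hk := key_mem hSig C hA' hA hhA' (homog_shift hhA d) hhC hX'1 hX'2 hX1 hX2 i' j
    have hCf : C.map f = -(Matrix.single i j' (1 : S)) := by
      rw [hCdef, matrix_map_neg, stdBasis_map]
    have hent : (-(X * C.map f * X')) j i' = x * y := by
      rw [hCf, Matrix.mul_neg, Matrix.neg_mul, neg_neg]
      rw [mul_std_mul X X' i j' j i']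
      rw [hXv, hX'v]
    have hdeg2 : (fun k => β k * d) j * (α' i')⁻¹ = γ * δ := by
      show β j * d * (α' i')⁻¹ = γ * δ
      rw [hd, ← hdeg, ← hdeg']
      group
    rw [hent, hdeg2] at hk
    exact hk
  -- one is in the rational closure of degree 1
  have hone_mem : (1 : S) ∈ RatCl 𝒜 Sig f 1 := by
    refine ⟨1, 1, fun _ => 1, fun _ => 1, 0, 0, 1, hSig.1, hhomog_one 1, by simp,
      hid1, hid2, ?_⟩
    simp [Matrix.one_apply]
  set U := AddSubgroup.closure (⋃ γ : Γ, RatCl 𝒜 Sig f γ) with hU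
  have base : ∀ x ∈ (⋃ γ : Γ, RatCl 𝒜 Sig f γ), ∀ y ∈ U, x * y ∈ U := by
    intro x hx y hy
    refine AddSubgroup.closure_induction ?_ ?_ ?_ ?_ hy
    · intro z hz
      obtain ⟨γ, hγ⟩ := Set.mem_iUnion.1 hx
      obtain ⟨δ, hδ⟩ := Set.mem_iUnion.1 hz
      exact AddSubgroup.subset_closure (Set.mem_iUnion.2 ⟨γ * δ, p3 γ δ x z hγ hδ⟩)
    · rw [mul_zero]; exact zero_mem U
    · intro a b _ _ hua hub
      rw [mul_add]; exact add_mem hua hub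
    · intro a _ hua
      rw [mul_neg]; exact neg_mem hua
  have mulU : ∀ x ∈ U, ∀ y ∈ U, x * y ∈ U := by
    intro x hx y hy
    refine AddSubgroup.closure_induction ?_ ?_ ?_ ?_ hx
    · intro z hz; exact base z hz y hy
    · rw [zero_mul]; exact zero_mem U
    · intro a b _ _ hua hub
      rw [add_mul]; exact add_mem hua hub
    · intro a _ hua
      rw [neg_mul]; exact neg_mem hua
  let T : Subring S :=
    { carrier := U,
      add_mem' := fun ha hb => add_mem ha hb,
      zero_mem' := zero_mem U,
      neg_mem' := fun ha => neg_mem ha,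
      one_mem' := AddSubgroup.subset_closure (Set.mem_iUnion.2 ⟨1, hone_mem⟩),
      mul_mem' := fun ha hb => mulU _ ha _ hb }
  refine ⟨p1, p2, p3, ⟨T, ?_, ?_⟩⟩
  · exact AddSubgroup.ext fun x => Iff.rfl
  · rintro s ⟨r, rfl⟩
    show f r ∈ U
    obtain ⟨dd, hdd⟩ := hinternal.surjective r
    rw [← hdd]
    clear hdd
    induction dd using DirectSum.induction_on with
    | zero => rw [map_zero, map_zero]; exact zero_mem U
    | of γ z =>
        rw [DirectSum.coeAddMonoidHom_of]
        exact AddSubgroup.subset_closure (Set.mem_iUnion.2 ⟨γ, p1 γ z z.2⟩)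
    | add a b hua hub =>
        rw [map_add, map_add]
        exact add_mem hua hub
end

section
/- Let Γ be a group, R a Γ-graded ring, S a ring, f : R → S a ring homomorphism, and let Σ = {A ∈ 𝔐(R) : A^f is invertible over S}. If γ ∈ Γ and x ∈ (Q_f(Σ))_γ is invertible in S, then x⁻¹ ∈ (Q_f(Σ))_{γ⁻¹}. -/
open Matrix

universe u v w

section AuxInv
variable {S : Type w} [Ring S]

private lemma aux_block_mul_one {n : ℕ} (A' B : Matrix (Fin n) (Fin n) S)
    (Q : Matrix (Fin n) (Fin 1) S) (U : Matrix (Fin 1) (Fin n) S)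
    (X Y : Matrix (Fin 1) (Fin 1) S)
    (hAB : A' * B = 1) (hXY : X * Y = 1)
    (hUBQ : U * B * Q = -X) :
    Matrix.fromBlocks A' Q U 0 *
      Matrix.fromBlocks (B + B * Q * Y * (U * B)) (-(B * Q * Y)) (-(Y * (U * B))) Y = 1 := by
  rw [Matrix.fromBlocks_multiply]
  have hTL : A' * (B + B * Q * Y * (U * B)) + Q * -(Y * (U * B)) = 1 := by
    simp only [Matrix.mul_add, Matrix.mul_neg, ← Matrix.mul_assoc, hAB, Matrix.one_mul]
    abel
  have hTR : A' * -(B * Q * Y) + Q * Y = 0 := by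
    simp only [Matrix.mul_neg, ← Matrix.mul_assoc, hAB, Matrix.one_mul]
    abel
  have hBL : U * (B + B * Q * Y * (U * B)) + (0 : Matrix (Fin 1) (Fin 1) S) * -(Y * (U * B)) = 0 := by
    simp only [Matrix.zero_mul, add_zero, Matrix.mul_add, ← Matrix.mul_assoc,
      hUBQ, Matrix.neg_mul, hXY, Matrix.one_mul]
    abel
  have hBR : U * -(B * Q * Y) + (0 : Matrix (Fin 1) (Fin 1) S) * Y = 1 := by
    simp only [Matrix.zero_mul, add_zero, Matrix.mul_neg, ← Matrix.mul_assoc,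
      hUBQ, Matrix.neg_mul, hXY, neg_neg]
  rw [hTL, hTR, hBL, hBR, Matrix.fromBlocks_one]

private lemma aux_one_block_mul {n : ℕ} (A' B : Matrix (Fin n) (Fin n) S)
    (Q : Matrix (Fin n) (Fin 1) S) (U : Matrix (Fin 1) (Fin n) S)
    (X Y : Matrix (Fin 1) (Fin 1) S)
    (hBA : B * A' = 1) (hYX : Y * X = 1)
    (hUBQ : U * (B * Q) = -X) :
    Matrix.fromBlocks (B + B * Q * Y * (U * B)) (-(B * Q * Y)) (-(Y * (U * B))) Y *
      Matrix.fromBlocks A' Q U 0 = 1 := by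
  rw [Matrix.fromBlocks_multiply]
  have hTL : (B + B * Q * Y * (U * B)) * A' + -(B * Q * Y) * U = 1 := by
    simp only [Matrix.add_mul, Matrix.neg_mul, Matrix.mul_assoc, hBA, Matrix.mul_one]
    abel
  have hTR : (B + B * Q * Y * (U * B)) * Q + -(B * Q * Y) * (0 : Matrix (Fin 1) (Fin 1) S) = 0 := by
    simp only [Matrix.mul_zero, add_zero, Matrix.add_mul, Matrix.neg_mul, Matrix.mul_assoc,
      hUBQ, Matrix.mul_neg, hYX, Matrix.mul_one]
    abel
  have hBL : -(Y * (U * B)) * A' + Y * U = 0 := by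
    simp only [Matrix.neg_mul, Matrix.mul_assoc, hBA, Matrix.mul_one]
    abel
  have hBR : -(Y * (U * B)) * Q + Y * (0 : Matrix (Fin 1) (Fin 1) S) = 1 := by
    simp only [Matrix.mul_zero, add_zero, Matrix.neg_mul, Matrix.mul_assoc,
      hUBQ, Matrix.mul_neg, hYX, neg_neg]
  rw [hTL, hTR, hBL, hBR, Matrix.fromBlocks_one]

end AuxInv


/-- Let `R` be a `Γ`-graded ring, `S` a ring, `f : R → S` a ring
homomorphism, and let `Sig` be the set of all square homogeneous matrices over `R`
which become invertible over `S` under `f`.  If `x ∈ (Q_f(Sig))_γ` is invertible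
in `S` (with two-sided inverse `y`), then `x⁻¹ = y ∈ (Q_f(Sig))_{γ⁻¹}`. -/
theorem graded_rational_closure_inv_mem
    {Γ : Type u} [Group Γ] [DecidableEq Γ] {R : Type v} [Ring R] {S : Type w} [Ring S]
    (𝒜 : Γ → AddSubgroup R)
    (hinternal : DirectSum.IsInternal 𝒜)
    (hone : (1 : R) ∈ 𝒜 1)
    (hmul : ∀ {γ δ : Γ} {x y : R}, x ∈ 𝒜 γ → y ∈ 𝒜 δ → x * y ∈ 𝒜 (γ * δ))
    (f : R →+* S)
    (Sig : Set (SqMat R))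
    (hSig : Sig = {p : SqMat R | IsHomogSq 𝒜 p.2 ∧ IsUnit ((p.2).map ⇑f)})
    (γ : Γ) (x y : S) (hx : x ∈ RatCl 𝒜 Sig f γ)
    (hxy : x * y = 1) (hyx : y * x = 1) :
    y ∈ RatCl 𝒜 Sig f γ⁻¹ := by
  classical
  obtain ⟨n, A, α, β, i, j, B, hASig, hAhom, hdeg, hAB, hBA, hBji⟩ := hx
  have e : Fin n ⊕ Fin 1 ≃ Fin (n + 1) := finSumFinEquiv
  -- blocks over R
  let c : Matrix (Fin n) (Fin 1) R := Matrix.of fun k _ => if k = i then (-1 : R) else 0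
  let rr : Matrix (Fin 1) (Fin n) R := Matrix.of fun _ k => if k = j then (1 : R) else 0
  -- blocks over S
  let Q : Matrix (Fin n) (Fin 1) S := Matrix.of fun k _ => if k = i then (-1 : S) else 0
  let U : Matrix (Fin 1) (Fin n) S := Matrix.of fun _ k => if k = j then (1 : S) else 0
  let X : Matrix (Fin 1) (Fin 1) S := Matrix.of fun _ _ => x
  let Y : Matrix (Fin 1) (Fin 1) S := Matrix.of fun _ _ => y
  have hXY : X * Y = 1 := by
    ext a b
    rw [Subsingleton.elim a 0, Subsingleton.elim b 0]
    simp [X, Y, Matrix.mul_apply, Matrix.one_apply, hxy]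
  have hYX : Y * X = 1 := by
    ext a b
    rw [Subsingleton.elim a 0, Subsingleton.elim b 0]
    simp [X, Y, Matrix.mul_apply, Matrix.one_apply, hyx]
  have hUB : ∀ k, (U * B) 0 k = B j k := by
    intro k
    simp [U, Matrix.mul_apply]
  have hUBQ : U * B * Q = -X := by
    ext a b
    rw [Subsingleton.elim a 0, Subsingleton.elim b 0]
    have h0 : (U * B * Q) 0 0 = ∑ k, (U * B) 0 k * Q k 0 := Matrix.mul_apply
    rw [h0]
    simp only [hUB, Q, Matrix.of_apply, mul_ite, mul_neg, mul_one, mul_zero]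
    rw [Finset.sum_ite_eq' Finset.univ i (fun k => -B j k)]
    simp [hBji, X]
  have hUBQ' : U * (B * Q) = -X := by rw [← Matrix.mul_assoc]; exact hUBQ
  have h1 := aux_block_mul_one (A.map ⇑f) B Q U X Y hAB hXY hUBQ
  have h2 := aux_one_block_mul (A.map ⇑f) B Q U X Y hBA hYX hUBQ'
  -- the bordered matrices
  set M : Matrix (Fin (n + 1)) (Fin (n + 1)) R :=
    (Matrix.fromBlocks A c rr 0).submatrix ⇑e.symm ⇑e.symm with hM
  set N : Matrix (Fin (n + 1)) (Fin (n + 1)) S :=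
    (Matrix.fromBlocks (B + B * Q * Y * (U * B)) (-(B * Q * Y)) (-(Y * (U * B))) Y).submatrix
      ⇑e.symm ⇑e.symm with hN
  have hMmap : M.map ⇑f =
      (Matrix.fromBlocks (A.map ⇑f) Q U 0).submatrix ⇑e.symm ⇑e.symm := by
    have cmap : c.map ⇑f = Q := by
      ext a b
      simp [c, Q, apply_ite f]
    have rmap : rr.map ⇑f = U := by
      ext a b
      simp [rr, U, apply_ite f]
    have zmap : (0 : Matrix (Fin 1) (Fin 1) R).map ⇑f = 0 := Matrix.map_zero ⇑f (map_zero f)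
    rw [hM, ← Matrix.submatrix_map, Matrix.fromBlocks_map, cmap, rmap, zmap]
  have h1' : M.map ⇑f * N = 1 := by
    rw [hMmap, hN, Matrix.submatrix_mul_equiv, h1, Matrix.submatrix_one_equiv]
  have h2' : N * M.map ⇑f = 1 := by
    rw [hN, hMmap, Matrix.submatrix_mul_equiv, h2, Matrix.submatrix_one_equiv]
  -- distributions
  set α' : Fin (n + 1) → Γ := fun k => Sum.elim α (fun _ => β j) (e.symm k) with hα'
  set β' : Fin (n + 1) → Γ := fun k => Sum.elim β (fun _ => α i) (e.symm k) with hβ'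
  have hhom : IsHomog 𝒜 M α' β' := by
    intro k l
    rw [hM, hα', hβ']
    rcases hk : e.symm k with a | a <;> rcases hl : e.symm l with b | b <;>
      simp only [Matrix.submatrix_apply, hk, hl, Sum.elim_inl, Sum.elim_inr,
        Matrix.fromBlocks_apply₁₁, Matrix.fromBlocks_apply₁₂,
        Matrix.fromBlocks_apply₂₁, Matrix.fromBlocks_apply₂₂]
    · exact hAhom a b
    · show (if a = i then (-1 : R) else 0) ∈ 𝒜 (α a * (α i)⁻¹)
      by_cases hai : a = i
      · subst hai
        have h1 : α a * (α a)⁻¹ = 1 := by group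
        rw [if_pos rfl, h1]
        exact (𝒜 1).neg_mem hone
      · rw [if_neg hai]
        exact (𝒜 _).zero_mem
    · show (if b = j then (1 : R) else 0) ∈ 𝒜 (β j * (β b)⁻¹)
      by_cases hbj : b = j
      · subst hbj
        have h1 : β b * (β b)⁻¹ = 1 := by group
        rw [if_pos rfl, h1]
        exact hone
      · rw [if_neg hbj]
        exact (𝒜 _).zero_mem
    · exact (𝒜 _).zero_mem
  refine ⟨n + 1, M, α', β', e (Sum.inr 0), e (Sum.inr 0), N, ?_, hhom, ?_, h1', h2', ?_⟩
  · rw [hSig]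
    exact ⟨⟨α', β', hhom⟩, ⟨⟨M.map ⇑f, N, h1', h2'⟩, rfl⟩⟩
  · rw [hα', hβ']
    simp only [Equiv.symm_apply_apply, Sum.elim_inr]
    rw [← hdeg, _root_.mul_inv_rev, inv_inv]
  · rw [hN]
    show Matrix.fromBlocks _ _ _ Y (e.symm (e (Sum.inr 0))) (e.symm (e (Sum.inr 0))) = y
    rw [Equiv.symm_apply_apply]
    simp [Y]
end

section
/- Let Γ be a group, R a Γ-graded ring, K a Γ-graded division ring, and φ : R → K a homomorphism of Γ-graded rings. Then the singular kernel 𝒫 = {A ∈ 𝔐(R) : A^φ is not invertible over K} is a gr-prime matrix ideal of R, i.e., it satisfies (PM1)–(PM6). -/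
open Matrix

universe u v w

section MatLemmas
variable {l m : Type*} [Fintype l] [Fintype m] [DecidableEq l] [DecidableEq m]
  {α : Type*} [Ring α]

theorem mySubU (e f : l ≃ m) (M : Matrix m m α) (h : IsUnit M) :
    IsUnit (M.submatrix ⇑e ⇑f) := by
  obtain ⟨N, h1, h2⟩ := isUnit_iff_exists.mp h
  refine isUnit_iff_exists.mpr ⟨N.submatrix ⇑f ⇑e, ?_, ?_⟩
  · rw [Matrix.submatrix_mul_equiv M N _ f _, h1, Matrix.submatrix_one_equiv]
  · rw [Matrix.submatrix_mul_equiv N M _ e _, h2, Matrix.submatrix_one_equiv]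

theorem mySubU_iff (e f : l ≃ m) (M : Matrix m m α) :
    IsUnit (M.submatrix ⇑e ⇑f) ↔ IsUnit M := by
  refine ⟨fun h => ?_, mySubU e f M⟩
  have := mySubU e.symm f.symm _ h
  simpa [Matrix.submatrix_submatrix] using this

theorem myBlockUnit (A : Matrix l l α) (B : Matrix l m α) (C : Matrix m l α)
    (D : Matrix m m α) (A' : Matrix l l α) (hA1 : A * A' = 1) (hA2 : A' * A = 1)
    (W : Matrix m m α) (hW1 : (D - C * A' * B) * W = 1) (hW2 : W * (D - C * A' * B) = 1) :
    IsUnit (Matrix.fromBlocks A B C D) := by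
  have hDW' : D * W = 1 + C * A' * B * W := by
    rw [Matrix.sub_mul] at hW1
    exact sub_eq_iff_eq_add.mp hW1
  have hWD' : W * D = 1 + W * (C * (A' * B)) := by
    rw [Matrix.mul_sub] at hW2
    have := sub_eq_iff_eq_add.mp hW2
    simpa only [Matrix.mul_assoc] using this
  refine isUnit_iff_exists.mpr
    ⟨Matrix.fromBlocks (A' + A' * (B * (W * (C * A')))) (-(A' * (B * W))) (-(W * (C * A'))) W,
      ?_, ?_⟩
  · rw [Matrix.fromBlocks_multiply, ← Matrix.fromBlocks_one, Matrix.fromBlocks_inj]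
    refine ⟨?_, ?_, ?_, ?_⟩
    · simp only [Matrix.mul_add, Matrix.mul_neg, ← Matrix.mul_assoc]
      rw [hA1]
      simp only [Matrix.one_mul]
      abel
    · simp only [Matrix.mul_neg, ← Matrix.mul_assoc]
      rw [hA1]
      simp only [Matrix.one_mul]
      abel
    · simp only [Matrix.mul_add, Matrix.mul_neg, ← Matrix.mul_assoc]
      rw [hDW']
      simp only [Matrix.add_mul, Matrix.one_mul]
      abel
    · simp only [Matrix.mul_neg, ← Matrix.mul_assoc]
      rw [hDW']
      abel
  · rw [Matrix.fromBlocks_multiply, ← Matrix.fromBlocks_one, Matrix.fromBlocks_inj]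
    refine ⟨?_, ?_, ?_, ?_⟩
    · simp only [Matrix.add_mul, Matrix.neg_mul, Matrix.mul_assoc]
      rw [hA2]
      simp only [Matrix.mul_one]
      abel
    · simp only [Matrix.add_mul, Matrix.neg_mul, Matrix.mul_assoc]
      rw [hWD']
      simp only [Matrix.mul_add, Matrix.mul_one]
      abel
    · simp only [Matrix.neg_mul, Matrix.mul_assoc]
      rw [hA2]
      simp only [Matrix.mul_one]
      abel
    · simp only [Matrix.neg_mul, Matrix.mul_assoc]
      rw [hWD']
      abel

theorem myDiagBlockUnit_iff (A : Matrix l l α) (D : Matrix m m α) :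
    IsUnit (Matrix.fromBlocks A 0 0 D) ↔ IsUnit A ∧ IsUnit D := by
  constructor
  · rintro h
    obtain ⟨Z, h1, h2⟩ := isUnit_iff_exists.mp h
    rw [← Matrix.fromBlocks_toBlocks Z, Matrix.fromBlocks_multiply, ← Matrix.fromBlocks_one] at h1 h2
    have e111 := congrArg Matrix.toBlocks₁₁ h1
    have e122 := congrArg Matrix.toBlocks₂₂ h1
    have e211 := congrArg Matrix.toBlocks₁₁ h2
    have e222 := congrArg Matrix.toBlocks₂₂ h2
    simp only [Matrix.toBlocks_fromBlocks₁₁, Matrix.toBlocks_fromBlocks₂₂,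
      Matrix.zero_mul, Matrix.mul_zero, add_zero, zero_add] at e111 e122 e211 e222
    exact ⟨isUnit_iff_exists.mpr ⟨Z.toBlocks₁₁, e111, e211⟩,
      isUnit_iff_exists.mpr ⟨Z.toBlocks₂₂, e122, e222⟩⟩
  · rintro ⟨hA, hD⟩
    obtain ⟨A', a1, a2⟩ := isUnit_iff_exists.mp hA
    obtain ⟨D', d1, d2⟩ := isUnit_iff_exists.mp hD
    refine isUnit_iff_exists.mpr ⟨Matrix.fromBlocks A' 0 0 D', ?_, ?_⟩ <;>
      simp [Matrix.fromBlocks_multiply, a1, a2, d1, d2, ← Matrix.fromBlocks_one]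

theorem myNullNotUnit {n : Type*} [Fintype n] [DecidableEq n] (M : Matrix n n α)
    (x : n → α) (hx : x ≠ 0) (h0 : M.mulVec x = 0) : ¬ IsUnit M := fun h => by
  obtain ⟨N, _, h2⟩ := isUnit_iff_exists.mp h
  apply hx
  have : N.mulVec (M.mulVec x) = x := by
    rw [Matrix.mulVec_mulVec, h2, Matrix.one_mulVec]
  rw [h0, Matrix.mulVec_zero] at this
  exact this.symm
end MatLemmas

section HInv
variable {Γ : Type u} [Group Γ] [DecidableEq Γ] {K : Type w} [Ring K]

theorem myHInv (𝒦 : Γ → AddSubgroup K)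
    (hKinternal : DirectSum.IsInternal 𝒦)
    (hKone : (1 : K) ∈ 𝒦 1)
    (hKmul : ∀ {γ δ : Γ} {x y : K}, x ∈ 𝒦 γ → y ∈ 𝒦 δ → x * y ∈ 𝒦 (γ * δ))
    (hKdiv : ∀ {γ : Γ} {x : K}, x ∈ 𝒦 γ → x ≠ 0 → IsUnit x)
    {γ : Γ} {x : K} (hx : x ∈ 𝒦 γ) (hne : x ≠ 0) :
    ∃ y, y ∈ 𝒦 γ⁻¹ ∧ x * y = 1 ∧ y * x = 1 := by
  letI : DecidableEq (Additive Γ) := ‹DecidableEq Γ›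
  set 𝒜 : Additive Γ → AddSubgroup K := fun i => 𝒦 i.toMul with h𝒜
  letI : SetLike.GradedMonoid 𝒜 :=
    { one_mem := hKone
      mul_mem := fun {i j x y} hx hy => hKmul hx hy }
  letI : DirectSum.Decomposition 𝒜 :=
    DirectSum.IsInternal.chooseDecomposition _ (show DirectSum.IsInternal 𝒜 from hKinternal)
  letI : GradedRing 𝒜 := {}
  obtain ⟨u, hu⟩ := hKdiv hx hne
  have hxu : x * ↑u⁻¹ = 1 := by rw [← hu]; exact u.mul_inv
  have hux : ↑u⁻¹ * x = 1 := by rw [← hu]; exact u.inv_mul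
  refine ⟨(DirectSum.decompose 𝒜 (↑u⁻¹ : K) (Additive.ofMul γ⁻¹) : K), ?_, ?_, ?_⟩
  · exact SetLike.coe_mem _
  · have h := DirectSum.coe_decompose_mul_add_of_left_mem 𝒜
      (i := Additive.ofMul γ) (j := Additive.ofMul γ⁻¹) (b := (↑u⁻¹ : K)) hx
    rw [hxu] at h
    have hidx : Additive.ofMul γ + Additive.ofMul γ⁻¹ = 0 := by
      rw [← ofMul_mul, mul_inv_cancel, ofMul_one]
    rw [hidx] at h
    exact h.symm.trans (DirectSum.decompose_of_mem_same 𝒜 (show (1:K) ∈ 𝒜 0 from hKone))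
  · have h := DirectSum.coe_decompose_mul_add_of_right_mem 𝒜
      (i := Additive.ofMul γ⁻¹) (j := Additive.ofMul γ) (a := (↑u⁻¹ : K)) hx
    rw [hux] at h
    have hidx : Additive.ofMul γ⁻¹ + Additive.ofMul γ = 0 := by
      rw [← ofMul_mul, inv_mul_cancel, ofMul_one]
    rw [hidx] at h
    exact h.symm.trans (DirectSum.decompose_of_mem_same 𝒜 (show (1:K) ∈ 𝒜 0 from hKone))
end HInv


section Elim
variable {Γ : Type u} [Group Γ] {K : Type w} [Ring K] [Nontrivial K]
variable (𝒦 : Γ → AddSubgroup K)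

theorem myLiftNull
    (hKmul : ∀ {γ δ : Γ} {x y : K}, x ∈ 𝒦 γ → y ∈ 𝒦 δ → x * y ∈ 𝒦 (γ * δ)) {m n : ℕ} (α : Fin (m+1) → Γ) (β : Fin (n+1) → Γ)
    (M : Matrix (Fin (m+1)) (Fin (n+1)) K) (hM : IsHomog 𝒦 M α β) (j₀ : Fin (n+1))
    (q : K) (hq : q ∈ 𝒦 (β j₀ * (α 0)⁻¹)) (hq1 : M 0 j₀ * q = 1)
    (δ : Γ) (y : Fin n → K) (hy : ∀ j, y j ∈ 𝒦 (β (j₀.succAbove j) * δ)) (hy0 : y ≠ 0)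
    (hyN : ∀ i : Fin m,
      ∑ j, (M i.succ (j₀.succAbove j) - M i.succ j₀ * q * M 0 (j₀.succAbove j)) * y j = 0) :
    ∃ x : Fin (n+1) → K, x ≠ 0 ∧ (∀ j, x j ∈ 𝒦 (β j * δ)) ∧ M.mulVec x = 0 := by
  set s : K := ∑ j, M 0 (j₀.succAbove j) * y j with hs
  set x : Fin (n+1) → K := Fin.insertNth j₀ (-(q * s)) y with hx
  have hxj₀ : x j₀ = -(q * s) := by rw [hx]; exact Fin.insertNth_apply_same (α := fun _ => K) j₀ _ y
  have hxsA : ∀ j, x (j₀.succAbove j) = y j := fun j => by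
    rw [hx]; exact Fin.insertNth_apply_succAbove (α := fun _ => K) j₀ _ y j
  refine ⟨x, ?_, ?_, ?_⟩
  · obtain ⟨j, hj⟩ := Function.ne_iff.mp hy0
    intro h
    exact hj (by rw [← hxsA j, h]; rfl)
  · intro k
    refine Fin.succAboveCases j₀ ?_ ?_ k
    · rw [hxj₀]
      refine neg_mem ?_
      have hsum : s ∈ 𝒦 (α 0 * δ) := by
        rw [hs]
        refine sum_mem fun j _ => ?_
        have := hKmul (hM 0 (j₀.succAbove j)) (hy j)
        rwa [show α 0 * (β (j₀.succAbove j))⁻¹ * (β (j₀.succAbove j) * δ) = α 0 * δ by group]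
          at this
      have := hKmul hq hsum
      rwa [show β j₀ * (α 0)⁻¹ * (α 0 * δ) = β j₀ * δ by group] at this
    · intro j
      rw [hxsA j]
      exact hy j
  · funext i
    have hrow : M.mulVec x i = M i j₀ * x j₀ + ∑ j, M i (j₀.succAbove j) * x (j₀.succAbove j) := by
      rw [Matrix.mulVec, dotProduct, Fin.sum_univ_succAbove (fun k => M i k * x k) j₀]
    rw [hrow, hxj₀]
    simp only [hxsA]
    refine Fin.cases ?_ ?_ i
    · rw [← hs, mul_neg, ← mul_assoc, hq1, one_mul, neg_add_cancel]
      rfl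
    · intro i
      have h := hyN i
      simp only [sub_mul, Finset.sum_sub_distrib] at h
      have h2 : ∑ j, M i.succ j₀ * q * M 0 (j₀.succAbove j) * y j
          = M i.succ j₀ * (q * s) := by
        rw [hs, Finset.mul_sum, Finset.mul_sum]
        simp only [mul_assoc]
      rw [h2] at h
      have h3 : ∑ j, M i.succ (j₀.succAbove j) * y j = M i.succ j₀ * (q * s) :=
        sub_eq_zero.mp h
      rw [h3, mul_neg, neg_add_cancel]
      rfl

theorem myG1
    (hKone : (1 : K) ∈ 𝒦 1)
    (hKmul : ∀ {γ δ : Γ} {x y : K}, x ∈ 𝒦 γ → y ∈ 𝒦 δ → x * y ∈ 𝒦 (γ * δ)) : ∀ (m : ℕ) {n : ℕ} (α : Fin m → Γ) (β : Fin n → Γ)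
    (M : Matrix (Fin m) (Fin n) K), IsHomog 𝒦 M α β → m < n →
    (∀ {γ : Γ} {x : K}, x ∈ 𝒦 γ → x ≠ 0 → ∃ y, y ∈ 𝒦 γ⁻¹ ∧ x * y = 1 ∧ y * x = 1) →
    ∃ δ x, x ≠ 0 ∧ (∀ j, x j ∈ 𝒦 (β j * δ)) ∧ M.mulVec x = 0 := by
  intro m
  induction m with
  | zero =>
    intro n α β M hM hmn _
    obtain ⟨n', rfl⟩ : ∃ n', n = n' + 1 := ⟨n - 1, by omega⟩
    refine ⟨(β 0)⁻¹, fun j => if j = 0 then 1 else 0, ?_, ?_, ?_⟩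
    · intro h
      have := congrFun h 0
      simp at this
    · intro j
      dsimp only
      by_cases hj : j = 0
      · subst hj
        rw [if_pos rfl, show β 0 * (β 0)⁻¹ = 1 by group]
        exact hKone
      · simp only [if_neg hj]
        exact zero_mem _
    · funext i
      exact i.elim0
  | succ m ih =>
    intro n α β M hM hmn hdiv
    obtain ⟨n', rfl⟩ : ∃ n', n = n' + 1 := ⟨n - 1, by omega⟩
    by_cases hrow : ∀ j, M 0 j = 0
    · obtain ⟨δ, x, hx0, hxh, hxn⟩ := ih (fun i => α i.succ) β (M.submatrix Fin.succ id)
        (fun i j => hM i.succ j) (by omega) hdiv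
      refine ⟨δ, x, hx0, hxh, ?_⟩
      funext i
      refine Fin.cases ?_ ?_ i
      · simp [Matrix.mulVec, dotProduct, hrow]
      · intro i
        exact congrFun hxn i
    · push_neg at hrow
      obtain ⟨j₀, hj₀⟩ := hrow
      obtain ⟨q, hq, hq1, hq2⟩ := hdiv (hM 0 j₀) hj₀
      rw [show (α 0 * (β j₀)⁻¹)⁻¹ = β j₀ * (α 0)⁻¹ by group] at hq
      set N : Matrix (Fin m) (Fin n') K := Matrix.of fun i j =>
        M i.succ (j₀.succAbove j) - M i.succ j₀ * q * M 0 (j₀.succAbove j) with hN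
      have hNh : IsHomog 𝒦 N (fun i => α i.succ) (fun j => β (j₀.succAbove j)) := by
        intro i j
        refine sub_mem (hM i.succ (j₀.succAbove j)) ?_
        have h1 := hKmul (hM i.succ j₀) hq
        have h2 := hKmul h1 (hM 0 (j₀.succAbove j))
        rwa [show α i.succ * (β j₀)⁻¹ * (β j₀ * (α 0)⁻¹) * (α 0 * (β (j₀.succAbove j))⁻¹)
          = α i.succ * (β (j₀.succAbove j))⁻¹ by group] at h2
      obtain ⟨δ, y, hy0, hyh, hyn⟩ := ih _ _ N hNh (by omega) hdiv
      exact ⟨δ, myLiftNull 𝒦 hKmul α β M hM j₀ q hq hq1 δ y hyh hy0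
        (fun i => congrFun hyn i)⟩
end Elim

section G2
variable {Γ : Type u} [Group Γ] {K : Type w} [Ring K] [Nontrivial K]
variable (𝒦 : Γ → AddSubgroup K)

/-- Equiv putting the pivot index first. -/
def pivotEquiv {n : ℕ} (i : Fin (n+1)) : (Unit ⊕ Fin n) ≃ Fin (n+1) :=
  ((finSuccEquiv' i).trans ((Equiv.optionEquivSumPUnit _).trans (Equiv.sumComm _ _))).symm

@[simp] theorem pivotEquiv_inl {n : ℕ} (i : Fin (n+1)) (u : Unit) :
    pivotEquiv i (Sum.inl u) = i := by
  simp [pivotEquiv, finSuccEquiv'_symm_none]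

@[simp] theorem pivotEquiv_inr {n : ℕ} (i : Fin (n+1)) (j : Fin n) :
    pivotEquiv i (Sum.inr j) = i.succAbove j := by
  simp [pivotEquiv, Equiv.optionEquivSumPUnit]

theorem myG2
    (hKone : (1 : K) ∈ 𝒦 1)
    (hKmul : ∀ {γ δ : Γ} {x y : K}, x ∈ 𝒦 γ → y ∈ 𝒦 δ → x * y ∈ 𝒦 (γ * δ))
    (hdiv : ∀ {γ : Γ} {x : K}, x ∈ 𝒦 γ → x ≠ 0 → ∃ y, y ∈ 𝒦 γ⁻¹ ∧ x * y = 1 ∧ y * x = 1) :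
    ∀ (n : ℕ) (α β : Fin n → Γ) (M : Matrix (Fin n) (Fin n) K), IsHomog 𝒦 M α β →
    (∀ (δ : Γ) (x : Fin n → K), (∀ j, x j ∈ 𝒦 (β j * δ)) → M.mulVec x = 0 → x = 0) →
    IsUnit M := by
  intro n
  induction n with
  | zero =>
    intro α β M _ _
    have : M = 1 := by ext i; exact i.elim0
    rw [this]; exact isUnit_one
  | succ n ih =>
    intro α β M hM hnull
    have hpiv : ∃ j₀, M 0 j₀ ≠ 0 := by
      by_contra hc
      push_neg at hc
      obtain ⟨δ, x, hx0, hxh, hxn⟩ := myG1 𝒦 hKone hKmul n (fun i => α i.succ) β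
        (M.submatrix Fin.succ id) (fun i j => hM i.succ j) (by omega) hdiv
      refine hx0 (hnull δ x hxh ?_)
      funext i
      refine Fin.cases ?_ ?_ i
      · simp [Matrix.mulVec, dotProduct, hc]
      · intro i
        exact congrFun hxn i
    obtain ⟨j₀, hj₀⟩ := hpiv
    obtain ⟨q, hq, hq1, hq2⟩ := hdiv (hM 0 j₀) hj₀
    rw [show (α 0 * (β j₀)⁻¹)⁻¹ = β j₀ * (α 0)⁻¹ by group] at hq
    set N : Matrix (Fin n) (Fin n) K := Matrix.of fun i j =>
      M i.succ (j₀.succAbove j) - M i.succ j₀ * q * M 0 (j₀.succAbove j) with hN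
    have hNh : IsHomog 𝒦 N (fun i => α i.succ) (fun j => β (j₀.succAbove j)) := by
      intro i j
      refine sub_mem (hM i.succ (j₀.succAbove j)) ?_
      have h1 := hKmul (hM i.succ j₀) hq
      have h2 := hKmul h1 (hM 0 (j₀.succAbove j))
      rwa [show α i.succ * (β j₀)⁻¹ * (β j₀ * (α 0)⁻¹) * (α 0 * (β (j₀.succAbove j))⁻¹)
        = α i.succ * (β (j₀.succAbove j))⁻¹ by group] at h2
    have hNnull : ∀ (δ : Γ) (y : Fin n → K), (∀ j, y j ∈ 𝒦 (β (j₀.succAbove j) * δ)) →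
        N.mulVec y = 0 → y = 0 := by
      intro δ y hyh hyn
      by_contra hy0
      obtain ⟨x, hx0, hxh, hxn⟩ := myLiftNull 𝒦 hKmul α β M hM j₀ q hq hq1 δ y hyh hy0
        (fun i => congrFun hyn i)
      exact hx0 (hnull δ x hxh hxn)
    have hNu : IsUnit N := ih _ _ N hNh hNnull
    obtain ⟨W, hW1, hW2⟩ := isUnit_iff_exists.mp hNu
    -- transport to block form
    have hsub : M.submatrix (pivotEquiv 0) (pivotEquiv j₀) =
        Matrix.fromBlocks (Matrix.of fun _ _ => M 0 j₀)
          (Matrix.of fun _ j => M 0 (j₀.succAbove j))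
          (Matrix.of fun i _ => M i.succ j₀)
          (Matrix.of fun i j => M i.succ (j₀.succAbove j)) := by
      ext i j
      rcases i with u | i <;> rcases j with v | j <;>
        simp [Matrix.fromBlocks, Fin.succAbove_zero]
    have hA1 : (Matrix.of fun (_ _ : Unit) => M 0 j₀) * (Matrix.of fun (_ _ : Unit) => q)
        = 1 := by
      ext u v
      simp [Matrix.mul_apply, Matrix.one_apply, hq1]
    have hA2 : (Matrix.of fun (_ _ : Unit) => q) * (Matrix.of fun (_ _ : Unit) => M 0 j₀)
        = 1 := by
      ext u v
      simp [Matrix.mul_apply, Matrix.one_apply, hq2]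
    have hSchur : (Matrix.of fun i j => M i.succ (j₀.succAbove j))
        - (Matrix.of fun i (_ : Unit) => M i.succ j₀) * (Matrix.of fun (_ _ : Unit) => q)
          * (Matrix.of fun (_ : Unit) j => M 0 (j₀.succAbove j)) = N := by
      ext i j
      simp [Matrix.mul_apply, hN]
    have hUnit : IsUnit (M.submatrix (pivotEquiv 0) (pivotEquiv j₀)) := by
      rw [hsub]
      refine myBlockUnit _ _ _ _ _ hA1 hA2 W ?_ ?_
      · rw [hSchur]; exact hW1
      · rw [hSchur]; exact hW2
    rw [mySubU_iff] at hUnit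
    exact hUnit
end G2

section DetSumK
variable {Γ : Type u} [Group Γ] {K : Type w} [Ring K] [Nontrivial K]
variable (𝒦 : Γ → AddSubgroup K)

theorem myGetNull
    (hKone : (1 : K) ∈ 𝒦 1)
    (hKmul : ∀ {γ δ : Γ} {x y : K}, x ∈ 𝒦 γ → y ∈ 𝒦 δ → x * y ∈ 𝒦 (γ * δ))
    (hdiv : ∀ {γ : Γ} {x : K}, x ∈ 𝒦 γ → x ≠ 0 → ∃ y, y ∈ 𝒦 γ⁻¹ ∧ x * y = 1 ∧ y * x = 1)
    {n : ℕ} (α β : Fin n → Γ) (M : Matrix (Fin n) (Fin n) K) (hMh : IsHomog 𝒦 M α β)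
    (hM : ¬ IsUnit M) :
    ∃ δ x, (∀ j, x j ∈ 𝒦 (β j * δ)) ∧ M.mulVec x = 0 ∧ x ≠ 0 := by
  by_contra hc
  push_neg at hc
  exact hM (myG2 𝒦 hKone hKmul hdiv n α β M hMh hc)

theorem myDetSumCol
    (hKone : (1 : K) ∈ 𝒦 1)
    (hKmul : ∀ {γ δ : Γ} {x y : K}, x ∈ 𝒦 γ → y ∈ 𝒦 δ → x * y ∈ 𝒦 (γ * δ))
    (hdiv : ∀ {γ : Γ} {x : K}, x ∈ 𝒦 γ → x ≠ 0 → ∃ y, y ∈ 𝒦 γ⁻¹ ∧ x * y = 1 ∧ y * x = 1)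
    {n : ℕ} (α β : Fin n → Γ) (M N S : Matrix (Fin n) (Fin n) K)
    (hMh : IsHomog 𝒦 M α β) (hNh : IsHomog 𝒦 N α β) (c : Fin n)
    (h1 : ∀ i j, j ≠ c → M i j = N i j)
    (hS : ∀ i j, S i j = if j = c then M i j + N i j else M i j)
    (hM : ¬ IsUnit M) (hN : ¬ IsUnit N) : ¬ IsUnit S := by
  obtain ⟨δ₁, x, hxh, hxn, hx0⟩ := myGetNull 𝒦 hKone hKmul hdiv α β M hMh hM
  obtain ⟨δ₂, y, hyh, hyn, hy0⟩ := myGetNull 𝒦 hKone hKmul hdiv α β N hNh hN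
  have keyM : ∀ (v : Fin n → K) (i : Fin n),
      S.mulVec v i = M.mulVec v i + N i c * v c := by
    intro v i
    simp only [Matrix.mulVec, dotProduct]
    have : ∀ j, S i j * v j = M i j * v j + (if j = c then N i c * v c else 0) := by
      intro j
      by_cases hj : j = c
      · subst hj
        rw [hS, if_pos rfl, if_pos rfl, add_mul]
      · rw [hS, if_neg hj, if_neg hj, add_zero]
    rw [Finset.sum_congr rfl fun j _ => this j, Finset.sum_add_distrib,
      Finset.sum_ite_eq' Finset.univ c fun _ => N i c * v c]
    simp
  have keyN : ∀ (v : Fin n → K) (i : Fin n),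
      S.mulVec v i = N.mulVec v i + M i c * v c := by
    intro v i
    simp only [Matrix.mulVec, dotProduct]
    have : ∀ j, S i j * v j = N i j * v j + (if j = c then M i c * v c else 0) := by
      intro j
      by_cases hj : j = c
      · subst hj
        rw [hS, if_pos rfl, if_pos rfl, add_mul, add_comm]
      · rw [hS, if_neg hj, if_neg hj, add_zero, h1 i j hj]
    rw [Finset.sum_congr rfl fun j _ => this j, Finset.sum_add_distrib,
      Finset.sum_ite_eq' Finset.univ c fun _ => M i c * v c]
    simp
  by_cases hxc : x c = 0
  · refine myNullNotUnit S x hx0 ?_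
    funext i
    rw [keyM x i, hxc, mul_zero, add_zero, hxn]
  by_cases hyc : y c = 0
  · refine myNullNotUnit S y hy0 ?_
    funext i
    rw [keyN y i, hyc, mul_zero, add_zero, hyn]
  obtain ⟨xc', _, hxc1, _⟩ := hdiv (hxh c) hxc
  obtain ⟨yc', _, hyc1, _⟩ := hdiv (hyh c) hyc
  set x' : Fin n → K := fun j => x j * xc' with hx'
  set y' : Fin n → K := fun j => y j * yc' with hy'
  set ec : Fin n → K := fun j => if j = c then (1 : K) else 0 with hec
  have hMx' : M.mulVec x' = 0 := by
    funext i
    have h : M.mulVec x' i = (M.mulVec x i) * xc' := by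
      simp only [Matrix.mulVec, dotProduct, hx', Finset.sum_mul, mul_assoc]
    rw [h, hxn]
    simp
  have hNy' : N.mulVec y' = 0 := by
    funext i
    have h : N.mulVec y' i = (N.mulVec y i) * yc' := by
      simp only [Matrix.mulVec, dotProduct, hy', Finset.sum_mul, mul_assoc]
    rw [h, hyn]
    simp
  have hx'c : x' c = 1 := by simp only [hx']; exact hxc1
  have hy'c : y' c = 1 := by simp only [hy']; exact hyc1
  set z : Fin n → K := x' + y' - ec with hz
  have hzc : z c = 1 := by
    simp only [hz, Pi.sub_apply, Pi.add_apply, hx'c, hy'c, hec]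
    simp
  have hz0 : z ≠ 0 := fun h => one_ne_zero (hzc.symm.trans (congrFun h c))
  have hSec : ∀ i, S.mulVec ec i = M i c + N i c := by
    intro i
    have h : S.mulVec ec i = S i c := by
      simp [Matrix.mulVec, dotProduct, hec, mul_ite, mul_one, mul_zero,
        Finset.sum_ite_eq' Finset.univ c]
    rw [h, hS, if_pos rfl]
  have hSz : S.mulVec z = 0 := by
    funext i
    rw [hz, Matrix.mulVec_sub, Matrix.mulVec_add]
    simp only [Pi.sub_apply, Pi.add_apply]
    rw [keyM x' i, keyN y' i, hSec i, hx'c, hy'c, mul_one, mul_one]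
    rw [congrFun hMx' i, congrFun hNy' i]
    simp only [Pi.zero_apply, zero_add]
    abel
  exact myNullNotUnit S z hz0 hSz

theorem myDetSumRow
    (hKone : (1 : K) ∈ 𝒦 1)
    (hKmul : ∀ {γ δ : Γ} {x y : K}, x ∈ 𝒦 γ → y ∈ 𝒦 δ → x * y ∈ 𝒦 (γ * δ))
    (hdiv : ∀ {γ : Γ} {x : K}, x ∈ 𝒦 γ → x ≠ 0 → ∃ y, y ∈ 𝒦 γ⁻¹ ∧ x * y = 1 ∧ y * x = 1)
    {n : ℕ} (α β : Fin n → Γ) (M N S : Matrix (Fin n) (Fin n) K)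
    (hMh : IsHomog 𝒦 M α β) (hNh : IsHomog 𝒦 N α β) (r : Fin n)
    (h1 : ∀ i j, i ≠ r → M i j = N i j)
    (hS : ∀ i j, S i j = if i = r then M i j + N i j else M i j)
    (hM : ¬ IsUnit M) (hN : ¬ IsUnit N) : ¬ IsUnit S := by
  obtain ⟨δ₁, x, hxh, hxn, hx0⟩ := myGetNull 𝒦 hKone hKmul hdiv α β M hMh hM
  obtain ⟨δ₂, y, hyh, hyn, hy0⟩ := myGetNull 𝒦 hKone hKmul hdiv α β N hNh hN
  have key : ∀ (v : Fin n → K) (i : Fin n),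
      S.mulVec v i = if i = r then M.mulVec v i + N.mulVec v i else M.mulVec v i := by
    intro v i
    by_cases hi : i = r
    · subst hi
      simp only [Matrix.mulVec, dotProduct, if_pos rfl, ← Finset.sum_add_distrib]
      refine Finset.sum_congr rfl fun j _ => ?_
      rw [hS, if_pos rfl, add_mul]
    · simp only [Matrix.mulVec, dotProduct, if_neg hi]
      refine Finset.sum_congr rfl fun j _ => ?_
      rw [hS, if_neg hi]
  have hMNoff : ∀ (v : Fin n → K) (i : Fin n), i ≠ r → M.mulVec v i = N.mulVec v i := by
    intro v i hi
    simp only [Matrix.mulVec, dotProduct]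
    exact Finset.sum_congr rfl fun j _ => by rw [h1 i j hi]
  set t : K := M.mulVec y r with ht
  by_cases htz : t = 0
  · refine myNullNotUnit S y hy0 ?_
    funext i
    rw [key y i]
    by_cases hi : i = r
    · rw [if_pos hi, hi, ← ht, htz, congrFun hyn r]
      simp
    · rw [if_neg hi, hMNoff y i hi, hyn]
  · have hth : t ∈ 𝒦 (α r * δ₂) := by
      rw [ht]
      have hexp : M.mulVec y r = ∑ j, M r j * y j := rfl
      rw [hexp]
      refine sum_mem fun j _ => ?_
      have := hKmul (hMh r j) (hyh j)
      rwa [show α r * (β j)⁻¹ * (β j * δ₂) = α r * δ₂ by group] at this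
    obtain ⟨t', _, ht1, _⟩ := hdiv hth htz
    set s : K := N.mulVec x r with hs
    set b : K := -(t' * s) with hb
    set z : Fin n → K := fun j => x j + y j * b with hzdef
    have hMyb : ∀ i, M.mulVec (fun j => y j * b) i = M.mulVec y i * b := by
      intro i
      simp only [Matrix.mulVec, dotProduct, Finset.sum_mul, mul_assoc]
    have hNyb : ∀ i, N.mulVec (fun j => y j * b) i = N.mulVec y i * b := by
      intro i
      simp only [Matrix.mulVec, dotProduct, Finset.sum_mul, mul_assoc]
    have hzsplit : ∀ (A : Matrix (Fin n) (Fin n) K) i,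
        A.mulVec z i = A.mulVec x i + A.mulVec (fun j => y j * b) i := by
      intro A i
      simp only [Matrix.mulVec, dotProduct, hzdef, mul_add, Finset.sum_add_distrib]
    have hz0 : z ≠ 0 := by
      intro hzz
      have hxy : ∀ j, x j = -(y j * b) := by
        intro j
        have := congrFun hzz j
        simp only [hzdef, Pi.zero_apply] at this
        exact eq_neg_of_add_eq_zero_left this
      have hs0 : s = 0 := by
        rw [hs]
        have : N.mulVec x r = N.mulVec (fun j => -(y j * b)) r := by
          congr 1
          funext j
          exact hxy j
        rw [this]
        have : N.mulVec (fun j => -(y j * b)) r = -(N.mulVec y r * b) := by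
          simp only [Matrix.mulVec, dotProduct, mul_neg, Finset.sum_neg_distrib,
            Finset.sum_mul, mul_assoc]
        rw [this, congrFun hyn r]
        simp
      have hbz : b = 0 := by rw [hb, hs0, mul_zero, neg_zero]
      apply hx0
      funext j
      rw [hxy j, hbz, mul_zero, neg_zero]
      rfl
    have hSz : S.mulVec z = 0 := by
      funext i
      rw [key z i]
      by_cases hi : i = r
      · rw [if_pos hi, hi, hzsplit M r, hzsplit N r, hMyb r, hNyb r,
          congrFun hxn r, congrFun hyn r, ← ht, ← hs, hb]
        rw [mul_neg, ← mul_assoc, ht1, one_mul]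
        simp
      · rw [if_neg hi, hzsplit M i, hMyb i, congrFun hxn i, hMNoff y i hi,
          congrFun hyn i]
        simp
    exact myNullNotUnit S z hz0 hSz

end DetSumK

/-- Let `R` be a `Γ`-graded ring, `K` a `Γ`-graded division ring
and `φ : R → K` a homomorphism of `Γ`-graded rings.  Then the singular kernel
`𝒫 = {A ∈ 𝔐(R) : A^φ is not invertible over K}` is a gr-prime matrix ideal,
i.e. it satisfies (PM1)–(PM6). -/
theorem singular_kernel_isGrPrimeMatrixIdeal
    {Γ : Type u} [Group Γ] [DecidableEq Γ] {R : Type v} [Ring R]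
    {K : Type w} [Ring K] [Nontrivial K]
    (𝒜 : Γ → AddSubgroup R) (𝒦 : Γ → AddSubgroup K)
    (hTinternal : DirectSum.IsInternal 𝒜)
    (hTone : (1 : R) ∈ 𝒜 1)
    (hTmul : ∀ {γ δ : Γ} {x y : R}, x ∈ 𝒜 γ → y ∈ 𝒜 δ → x * y ∈ 𝒜 (γ * δ))
    (hKinternal : DirectSum.IsInternal 𝒦)
    (hKone : (1 : K) ∈ 𝒦 1)
    (hKmul : ∀ {γ δ : Γ} {x y : K}, x ∈ 𝒦 γ → y ∈ 𝒦 δ → x * y ∈ 𝒦 (γ * δ))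
    (hKdiv : ∀ {γ : Γ} {x : K}, x ∈ 𝒦 γ → x ≠ 0 → IsUnit x)
    (φ : R →+* K) (hφ : ∀ {γ : Γ} {r : R}, r ∈ 𝒜 γ → φ r ∈ 𝒦 γ) :
    IsGrPrimeMatrixIdeal 𝒜
      {p : SqMat R | IsHomogSq 𝒜 p.2 ∧ ¬ IsUnit ((p.2).map ⇑φ)} := by
  classical
  have hdiv' : ∀ {γ : Γ} {x : K}, x ∈ 𝒦 γ → x ≠ 0 →
      ∃ y, y ∈ 𝒦 γ⁻¹ ∧ x * y = 1 ∧ y * x = 1 :=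
    fun hx hne => myHInv 𝒦 hKinternal hKone hKmul hKdiv hx hne
  have hmaph : ∀ {m n : ℕ} {A : Matrix (Fin m) (Fin n) R} {α : Fin m → Γ} {β : Fin n → Γ},
      IsHomog 𝒜 A α β → IsHomog 𝒦 (A.map ⇑φ) α β := fun h i j => hφ (h i j)
  have hdiagmap : ∀ {m n : ℕ} (A : Matrix (Fin m) (Fin m) R) (B : Matrix (Fin n) (Fin n) R),
      (diagSum A B).map ⇑φ = Matrix.submatrix
        (Matrix.fromBlocks (A.map ⇑φ) 0 0 (B.map ⇑φ))
        ⇑finSumFinEquiv.symm ⇑finSumFinEquiv.symm := by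
    intro m n A B
    rw [diagSum, Matrix.reindex_apply, ← Matrix.submatrix_map, Matrix.fromBlocks_map,
      Matrix.map_zero _ φ.map_zero, Matrix.map_zero _ φ.map_zero]
  refine
    { subset_homog := fun p hp => hp.1
      pm1 := ?_
      pm2 := ?_
      pm3 := ?_
      pm4 := ?_
      pm5 := ?_
      pm6 := ?_ }
  · -- pm1
    intro n A hA hfull
    refine ⟨hA, fun hU => ?_⟩
    unfold IsGrFull at hfull
    push_neg at hfull
    obtain ⟨r, P, Q, α, lam, β, hP, hQ, hPQ, hr⟩ := hfull
    obtain ⟨δ, x, hx0, hxh, hxn⟩ := myG1 𝒦 hKone hKmul r lam β (Q.map ⇑φ) (hmaph hQ) hr hdiv'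
    have hAx : (A.map ⇑φ).mulVec x = 0 := by
      rw [hPQ, Matrix.map_mul, ← Matrix.mulVec_mulVec, hxn, Matrix.mulVec_zero]
    exact myNullNotUnit _ x hx0 hAx hU
  · -- pm2
    intro n A B C hA hB hds
    obtain ⟨⟨α, β, hAh, hBh⟩, hdet⟩ := hds
    have hAu := hA.2
    have hBu := hB.2
    rcases hdet with ⟨c, h1, hC⟩ | ⟨r, h1, hC⟩
    · refine ⟨⟨α, β, fun i j => ?_⟩, ?_⟩
      · show C i j ∈ _
        rw [hC i j]
        by_cases hj : j = c
        · rw [if_pos hj]; exact add_mem (hAh i j) (hBh i j)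
        · rw [if_neg hj]; exact hAh i j
      · exact myDetSumCol 𝒦 hKone hKmul hdiv' α β (A.map ⇑φ) (B.map ⇑φ) (C.map ⇑φ)
          (hmaph hAh) (hmaph hBh) c
          (fun i j hj => congrArg ⇑φ (h1 i j hj))
          (fun i j => by
            rw [Matrix.map_apply, hC i j, apply_ite ⇑φ, map_add]
            rfl)
          hAu hBu
    · refine ⟨⟨α, β, fun i j => ?_⟩, ?_⟩
      · show C i j ∈ _
        rw [hC i j]
        by_cases hi : i = r
        · rw [if_pos hi]; exact add_mem (hAh i j) (hBh i j)
        · rw [if_neg hi]; exact hAh i j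
      · exact myDetSumRow 𝒦 hKone hKmul hdiv' α β (A.map ⇑φ) (B.map ⇑φ) (C.map ⇑φ)
          (hmaph hAh) (hmaph hBh) r
          (fun i j hi => congrArg ⇑φ (h1 i j hi))
          (fun i j => by
            rw [Matrix.map_apply, hC i j, apply_ite ⇑φ, map_add]
            rfl)
          hAu hBu
  · -- pm3
    intro m n A B hA hBh
    obtain ⟨hAh, hAu⟩ := hA
    obtain ⟨α, β, hAh'⟩ := hAh
    obtain ⟨α', β', hBh'⟩ := hBh
    constructor
    · refine ⟨fun i => Sum.elim α α' (finSumFinEquiv.symm i),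
              fun j => Sum.elim β β' (finSumFinEquiv.symm j), fun i j => ?_⟩
      show Matrix.fromBlocks A 0 0 B (finSumFinEquiv.symm i) (finSumFinEquiv.symm j) ∈
        𝒜 (Sum.elim α α' (finSumFinEquiv.symm i) * (Sum.elim β β' (finSumFinEquiv.symm j))⁻¹)
      rcases finSumFinEquiv.symm i with i' | i' <;> rcases finSumFinEquiv.symm j with j' | j'
      · exact hAh' i' j'
      · exact zero_mem _
      · exact zero_mem _
      · exact hBh' i' j'
    · intro hU
      rw [hdiagmap A B] at hU
      have hU' := (mySubU_iff finSumFinEquiv.symm finSumFinEquiv.symm _).mp hU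
      exact hAu ((myDiagBlockUnit_iff _ _).mp hU').1
  · -- pm4
    intro m n A B hAh hBh hD
    obtain ⟨_, hDu⟩ := hD
    by_cases hA : IsUnit (A.map ⇑φ)
    · by_cases hB : IsUnit (B.map ⇑φ)
      · exfalso
        apply hDu
        rw [hdiagmap A B]
        exact mySubU finSumFinEquiv.symm finSumFinEquiv.symm _
          ((myDiagBlockUnit_iff _ _).mpr ⟨hA, hB⟩)
      · exact Or.inr ⟨hBh, hB⟩
    · exact Or.inl ⟨hAh, hA⟩
  · -- pm5
    intro h
    exact h.2 (by rw [Matrix.map_one ⇑φ φ.map_zero φ.map_one]; exact isUnit_one)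
  · -- pm6
    intro n A e f hA
    obtain ⟨⟨α, β, hAh⟩, hAu⟩ := hA
    refine ⟨⟨fun i => α (e i), fun j => β (f j), fun i j => hAh (e i) (f j)⟩, fun hU => ?_⟩
    apply hAu
    rw [← Matrix.submatrix_map] at hU
    exact (mySubU_iff e f _).mp hU
end
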